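/- arXiv:2406.13371 — 9 statements merged into one kernel-verified Lean document; each statement's English description precedes it below -/
import Mathlib

section
/- Let W ∈ ℝ^{n×n} be invertible. Then the local IMA contrast c is invariant to left multiplication by an orthogonal matrix and to right multiplication by permutation and invertible diagonal matrices: (i) c(O·W) = c(W) for every orthogonal matrix O ∈ ℝ^{n×n}; (ii) c(W·P) = c(W) for every permutation matrix P ∈ ℝ^{n×n}; (iii) c(W·D) = c(W) for every invertible diagonal matrix D ∈ ℝ^{n×n}. -/
open scoped BigOperators
open Matrix

/-- The Euclidean norm of the `i`-th column of a square real matrix. -/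
noncomputable def columnNorm {n : ℕ} (W : Matrix (Fin n) (Fin n) ℝ) (i : Fin n) : ℝ :=
  Real.sqrt (∑ j, (W j i) ^ 2)

/-- The local IMA contrast of a square real matrix `W` with columns `w₁, …, w_n`:
`c(W) = ∑ i, log ‖wᵢ‖ − log |det W|`. -/
noncomputable def localIMAContrast {n : ℕ} (W : Matrix (Fin n) (Fin n) ℝ) : ℝ :=
  (∑ i, Real.log (columnNorm W i)) - Real.log |W.det|

lemma columnNorm_ne_zero {n : ℕ} {W : Matrix (Fin n) (Fin n) ℝ} (hW : W.det ≠ 0) (i : Fin n) :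
    columnNorm W i ≠ 0 := by
  intro h
  apply hW
  have hsum : ∑ j, (W j i) ^ 2 = 0 := by
    have hle := (Real.sqrt_eq_zero' ).mp h
    have hnn : 0 ≤ ∑ j, (W j i) ^ 2 := Finset.sum_nonneg fun j _ => sq_nonneg _
    linarith
  have hz : ∀ j, W j i = 0 := by
    intro j
    have := (Finset.sum_eq_zero_iff_of_nonneg (fun j _ => sq_nonneg (W j i))).mp hsum j
      (Finset.mem_univ j)
    exact pow_eq_zero_iff (by norm_num) |>.mp this
  exact Matrix.det_eq_zero_of_column_eq_zero i hz

/-- **Invariances of the local IMA contrast.**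
For an invertible matrix `W`, the local IMA contrast is invariant to
(i) left multiplication by an orthogonal matrix,
(ii) right multiplication by a permutation matrix, and
(iii) right multiplication by an invertible diagonal matrix. -/
theorem localIMAContrast_invariances
    {n : ℕ} (W : Matrix (Fin n) (Fin n) ℝ) (hW : IsUnit W.det) :
    (∀ O : Matrix (Fin n) (Fin n) ℝ, Oᵀ * O = 1 →
        localIMAContrast (O * W) = localIMAContrast W) ∧
    (∀ σ : Equiv.Perm (Fin n),
        localIMAContrast (W * Matrix.of fun i j => if σ i = j then (1 : ℝ) else 0) =
          localIMAContrast W) ∧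
    (∀ d : Fin n → ℝ, (∀ i, d i ≠ 0) →
        localIMAContrast (W * Matrix.diagonal d) = localIMAContrast W) := by
  have hdet : W.det ≠ 0 := by
    simpa using hW.ne_zero
  refine ⟨?_, ?_, ?_⟩
  · -- orthogonal
    intro O hO
    have hdetO : |O.det| = 1 := by
      have h1 : O.det * O.det = 1 := by
        have := congrArg Matrix.det hO
        simpa [Matrix.det_mul, Matrix.det_transpose] using this
      have : O.det = 1 ∨ O.det = -1 := by
        rcases mul_self_eq_one_iff.mp h1 with h | h
        · exact Or.inl h
        · exact Or.inr h
      rcases this with h | h <;> simp [h]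
    have hcol : ∀ i, columnNorm (O * W) i = columnNorm W i := by
      intro i
      unfold columnNorm
      congr 1
      have key : ∀ j, (O * W) j i = (O *ᵥ (fun k => W k i)) j := by
        intro j; simp [Matrix.mul_apply, Matrix.mulVec, dotProduct]
      calc ∑ j, ((O * W) j i) ^ 2
          = (O *ᵥ (fun k => W k i)) ⬝ᵥ (O *ᵥ (fun k => W k i)) := by
            simp [dotProduct, key, sq]
        _ = (fun k => W k i) ⬝ᵥ (fun k => W k i) := by
            rw [Matrix.dotProduct_mulVec, ← Matrix.mulVec_transpose,
              Matrix.mulVec_mulVec, hO, Matrix.one_mulVec]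
        _ = ∑ j, (W j i) ^ 2 := by simp [dotProduct, sq]
    unfold localIMAContrast
    rw [Matrix.det_mul, abs_mul, hdetO, one_mul]
    simp [hcol]
  · -- permutation
    intro σ
    have hP : (Matrix.of fun i j => if σ i = j then (1 : ℝ) else 0) = σ.permMatrix ℝ := by
      ext i j
      simp [Equiv.Perm.permMatrix, PEquiv.toMatrix, Equiv.toPEquiv, eq_comm]
    rw [hP]
    have hdetP : |(σ.permMatrix ℝ).det| = 1 := by
      rw [Matrix.det_permutation]
      rcases Int.units_eq_one_or (Equiv.Perm.sign σ) with h | h <;> simp [h]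
    have hcol : ∀ j, columnNorm (W * σ.permMatrix ℝ) j = columnNorm W (σ⁻¹ j) := by
      intro j
      unfold columnNorm
      congr 1
      refine Finset.sum_congr rfl fun k _ => ?_
      congr 1
      rw [Matrix.mul_apply]
      have : ∀ m, W k m * (σ.permMatrix ℝ) m j = if m = σ⁻¹ j then W k m else 0 := by
        intro m
        by_cases hm : σ m = j
        · have : m = σ⁻¹ j := by simp [← hm]
          simp [Equiv.Perm.permMatrix, PEquiv.toMatrix, Equiv.toPEquiv, hm, this]
        · have : ¬ m = σ⁻¹ j := by
            intro h; apply hm; rw [h]; simp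
          simp [Equiv.Perm.permMatrix, PEquiv.toMatrix, Equiv.toPEquiv, hm, this, Equiv.eq_symm_apply]
      rw [Finset.sum_congr rfl fun m _ => this m, Finset.sum_ite_eq' Finset.univ (σ⁻¹ j)]
      simp
    unfold localIMAContrast
    rw [Matrix.det_mul, abs_mul, hdetP, mul_one]
    congr 1
    rw [show ∀ f : Fin n → ℝ, ∑ i, f i = ∑ i, f i from fun _ => rfl]
    calc ∑ i, Real.log (columnNorm (W * σ.permMatrix ℝ) i)
        = ∑ i, Real.log (columnNorm W (σ⁻¹ i)) := by simp [hcol]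
      _ = ∑ i, Real.log (columnNorm W i) := Fintype.sum_equiv σ⁻¹ _ _ fun i => rfl
  · -- diagonal
    intro d hd
    have hcol : ∀ i, columnNorm (W * Matrix.diagonal d) i = |d i| * columnNorm W i := by
      intro i
      unfold columnNorm
      have : ∀ j, ((W * Matrix.diagonal d) j i) ^ 2 = (d i)^2 * (W j i)^2 := by
        intro j
        rw [Matrix.mul_diagonal]
        ring
      rw [Finset.sum_congr rfl fun j _ => this j, ← Finset.mul_sum,
        Real.sqrt_mul (sq_nonneg _), Real.sqrt_sq_eq_abs]
    unfold localIMAContrast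
    rw [Matrix.det_mul, Matrix.det_diagonal, abs_mul,
      Real.log_mul (abs_ne_zero.mpr hdet) (abs_ne_zero.mpr (Finset.prod_ne_zero_iff.mpr
        fun i _ => hd i)), Finset.abs_prod, Real.log_prod (fun i _ => abs_ne_zero.mpr (hd i))]
    have hlog : ∀ i, Real.log (columnNorm (W * Matrix.diagonal d) i)
        = Real.log |d i| + Real.log (columnNorm W i) := by
      intro i
      rw [hcol i, Real.log_mul (abs_ne_zero.mpr (hd i)) (columnNorm_ne_zero hdet i)]
    simp only [hlog, Finset.sum_add_distrib]
    ring
end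

section
/- Let f : ℝⁿ → ℝⁿ be continuously differentiable with Jacobian matrix J_f(s) invertible at every point s, and let μ be a probability measure on ℝⁿ. Then the global IMA contrast C_IMA(f, μ) := ∫ c(J_f(s)) dμ(s) ∈ [0, ∞] satisfies C_IMA(f, μ) ≥ 0, with C_IMA(f, μ) = 0 if and only if for μ-almost every s the columns of J_f(s) are pairwise orthogonal (equivalently, J_f(s) = O(s)·D(s) with O(s) orthogonal and D(s) invertible diagonal, μ-almost surely). -/
open MeasureTheory
open scoped BigOperators ENNReal

/-- The Jacobian matrix of `f : ℝⁿ → ℝⁿ` at `s`: `(J_f(s))_{ij} = ∂f_i/∂s_j (s)`. -/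
noncomputable def jacobian {n : ℕ} (f : (Fin n → ℝ) → (Fin n → ℝ)) (s : Fin n → ℝ) :
    Matrix (Fin n) (Fin n) ℝ :=
  Matrix.of fun i j => fderiv ℝ f s (Pi.single j 1) i

/-- The global IMA contrast `C_IMA(f, μ) = ∫ c(J_f(s)) dμ(s)`, as a Lebesgue integral
in `[0, ∞]` of the (nonnegative) local IMA contrast of the Jacobian. -/
noncomputable def globalIMAContrast {n : ℕ} (f : (Fin n → ℝ) → (Fin n → ℝ))
    (μ : Measure (Fin n → ℝ)) : ℝ≥0∞ :=
  ∫⁻ s, ENNReal.ofReal (localIMAContrast (jacobian f s)) ∂μ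

-- eigenvalue facts
lemma sum_eigenvalues_eq_trace {n : ℕ} {G : Matrix (Fin n) (Fin n) ℝ}
    (hH : G.IsHermitian) : ∑ i, hH.eigenvalues i = G.trace := by
  have h := hH.spectral_theorem
  have : G.trace = (Matrix.diagonal (RCLike.ofReal ∘ hH.eigenvalues)).trace := by
    conv_lhs => rw [h, Unitary.conjStarAlgAut_apply]
    rw [Matrix.trace_mul_cycle]
    rw [show (star (hH.eigenvectorUnitary : Matrix (Fin n) (Fin n) ℝ)) *
        (hH.eigenvectorUnitary : Matrix (Fin n) (Fin n) ℝ) = 1 from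
      Matrix.mem_unitaryGroup_iff'.mp hH.eigenvectorUnitary.2, one_mul]
  rw [this, Matrix.trace_diagonal]
  simp [RCLike.ofReal]

lemma amgm_det {n : ℕ} {G : Matrix (Fin n) (Fin n) ℝ}
    (hG : G.PosSemidef) (htr : G.trace = n) :
    G.det ≤ 1 ∧ (G.det = 1 → G = 1) := by
  classical
  have hH := hG.isHermitian
  have hdet : G.det = ∏ i, hH.eigenvalues i := by
    simpa using hH.det_eq_prod_eigenvalues
  have hsum : ∑ i, hH.eigenvalues i = n := by rw [sum_eigenvalues_eq_trace hH, htr]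
  have hnn : ∀ i, 0 ≤ hH.eigenvalues i := fun i => hG.eigenvalues_nonneg i
  constructor
  · by_cases hz : ∃ i, hH.eigenvalues i = 0
    · obtain ⟨i, hi⟩ := hz
      rw [hdet, Finset.prod_eq_zero (Finset.mem_univ i) hi]; norm_num
    · push_neg at hz
      have hpos : ∀ i, 0 < hH.eigenvalues i := fun i => (hnn i).lt_of_ne (Ne.symm (hz i))
      have hlog : Real.log G.det ≤ 0 := by
        rw [hdet, Real.log_prod (fun i _ => (hpos i).ne')]
        calc ∑ i, Real.log (hH.eigenvalues i) ≤ ∑ i, (hH.eigenvalues i - 1) :=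
              Finset.sum_le_sum fun i _ => Real.log_le_sub_one_of_pos (hpos i)
          _ = 0 := by rw [Finset.sum_sub_distrib, hsum]; simp
      have hdpos : 0 < G.det := by rw [hdet]; exact Finset.prod_pos fun i _ => hpos i
      exact (Real.log_nonpos_iff hdpos.le).mp hlog |>.trans (le_refl 1) |>.trans (le_refl 1)
  · intro h1
    have hpos : ∀ i, 0 < hH.eigenvalues i := by
      intro i
      rcases (hnn i).lt_or_eq with h | h
      · exact h
      · exfalso
        rw [hdet, Finset.prod_eq_zero (Finset.mem_univ i) h.symm] at h1; norm_num at h1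
    have heig : ∀ i, hH.eigenvalues i = 1 := by
      have hsumz : ∑ i, ((hH.eigenvalues i - 1) - Real.log (hH.eigenvalues i)) = 0 := by
        rw [Finset.sum_sub_distrib, Finset.sum_sub_distrib, hsum]
        rw [← Real.log_prod (fun i _ => (hpos i).ne'), ← hdet, h1]
        simp
      have hterm : ∀ i ∈ Finset.univ, 0 ≤ (hH.eigenvalues i - 1) - Real.log (hH.eigenvalues i) :=
        fun i _ => sub_nonneg.mpr (Real.log_le_sub_one_of_pos (hpos i))
      have := (Finset.sum_eq_zero_iff_of_nonneg hterm).mp hsumz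
      intro i
      by_contra hne
      have := this i (Finset.mem_univ i)
      have hlt := Real.log_lt_sub_one_of_pos (hpos i) hne
      linarith
    have : (Matrix.diagonal (RCLike.ofReal ∘ hH.eigenvalues) : Matrix (Fin n) (Fin n) ℝ) = 1 := by
      ext i j
      by_cases hij : i = j <;> simp [Matrix.diagonal, hij, heig, RCLike.ofReal, Matrix.one_apply]
    have hsp := hH.spectral_theorem
    rw [this, Unitary.conjStarAlgAut_apply, mul_one] at hsp
    rw [hsp, show ((hH.eigenvectorUnitary : Matrix (Fin n) (Fin n) ℝ)) *
        (star (hH.eigenvectorUnitary : Matrix (Fin n) (Fin n) ℝ)) = 1 from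
      Matrix.mem_unitaryGroup_iff.mp hH.eigenvectorUnitary.2]

lemma local_key {n : ℕ} (W : Matrix (Fin n) (Fin n) ℝ) (hW : W.det ≠ 0) :
    0 ≤ localIMAContrast W ∧
      (localIMAContrast W = 0 ↔ ∀ i j, i ≠ j → (∑ k, W k i * W k j) = 0) := by
  classical
  set r : Fin n → ℝ := columnNorm W with hr
  have hrpos : ∀ i, 0 < r i := by
    intro i
    have hcol : ∃ j, W j i ≠ 0 := by
      by_contra hc
      push_neg at hc
      exact hW (Matrix.det_eq_zero_of_column_eq_zero i hc)
    obtain ⟨j, hj⟩ := hcol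
    have hsum : 0 < ∑ k, (W k i) ^ 2 := by
      apply Finset.sum_pos' (fun k _ => sq_nonneg _)
      exact ⟨j, Finset.mem_univ j, by positivity⟩
    exact Real.sqrt_pos.mpr hsum
  have hrsq : ∀ i, r i ^ 2 = ∑ k, (W k i) ^ 2 := fun i =>
    Real.sq_sqrt (Finset.sum_nonneg fun k _ => sq_nonneg _)
  set U : Matrix (Fin n) (Fin n) ℝ := Matrix.of fun j i => W j i / r i with hU
  have hWU : W = U * Matrix.diagonal r := by
    ext j i
    simp [hU, Matrix.mul_apply, Matrix.diagonal, Finset.sum_ite_eq, div_mul_cancel₀,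
      (hrpos i).ne']
  have hdetW : W.det = U.det * ∏ i, r i := by
    rw [hWU, Matrix.det_mul, Matrix.det_diagonal]
  have hdetU : U.det ≠ 0 := fun h => hW (by rw [hdetW, h, zero_mul])
  -- the Gram matrix
  set G : Matrix (Fin n) (Fin n) ℝ := U.conjTranspose * U with hG
  have hGps : G.PosSemidef := Matrix.posSemidef_conjTranspose_mul_self U
  have hGapp : ∀ i j, G i j = ∑ k, U k i * U k j := by
    intro i j
    simp [hG, Matrix.mul_apply, Matrix.conjTranspose_apply]
  have hGdiag : ∀ i, G i i = 1 := by
    intro i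
    rw [hGapp]
    have : ∀ k, U k i * U k i = (W k i)^2 / (r i)^2 := by
      intro k; simp [hU]; ring
    rw [Finset.sum_congr rfl fun k _ => this k, ← Finset.sum_div, ← hrsq i,
      div_self (pow_ne_zero 2 (hrpos i).ne')]
  have htr : G.trace = n := by
    rw [Matrix.trace]
    simp only [Matrix.diag_apply]
    rw [Finset.sum_congr rfl fun i _ => hGdiag i]
    simp
  have hGdet : G.det = U.det ^ 2 := by
    rw [hG, Matrix.det_mul, Matrix.det_conjTranspose]
    simp [sq]
  obtain ⟨hle, heq⟩ := amgm_det hGps htr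
  -- localIMAContrast W = - log |U.det|
  have hcW : localIMAContrast W = - Real.log |U.det| := by
    rw [localIMAContrast, hdetW, abs_mul, abs_of_pos (Finset.prod_pos fun i _ => hrpos i),
      Real.log_mul (abs_ne_zero.mpr hdetU) ((Finset.prod_pos fun i _ => hrpos i).ne'),
      Real.log_prod (fun i _ => (hrpos i).ne')]
    ring
  have habs : |U.det| ≤ 1 := by
    have : U.det ^ 2 ≤ 1 := hGdet ▸ hle
    nlinarith [abs_nonneg U.det, sq_abs U.det]
  have hcontr_nonneg : 0 ≤ localIMAContrast W := by
    rw [hcW]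
    simp only [neg_nonneg]
    exact Real.log_nonpos (abs_nonneg _) habs
  refine ⟨hcontr_nonneg, ?_⟩
  constructor
  · intro h0
    have hlogz : Real.log |U.det| = 0 := by rw [hcW] at h0; linarith
    have habs1 : |U.det| = 1 := by
      rcases Real.log_eq_zero.mp hlogz with h | h | h
      · exact absurd h (abs_ne_zero.mpr hdetU)
      · exact h
      · exfalso; have := abs_nonneg U.det; linarith
    have hG1 : G = 1 := heq (by rw [hGdet, ← sq_abs, habs1]; norm_num)
    intro i j hij
    have : G i j = 0 := by rw [hG1]; simp [Matrix.one_apply, hij]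
    rw [hGapp] at this
    have hfac : ∑ k, U k i * U k j = (∑ k, W k i * W k j) / (r i * r j) := by
      rw [Finset.sum_div]
      refine Finset.sum_congr rfl fun k _ => ?_
      simp [hU]; ring
    rw [hfac] at this
    exact (div_eq_zero_iff.mp this).resolve_right (mul_pos (hrpos i) (hrpos j)).ne'
  · intro horth
    have hG1 : G = 1 := by
      ext i j
      by_cases hij : i = j
      · subst hij; rw [hGdiag]; simp [Matrix.one_apply]
      · rw [hGapp]
        have hfac : ∑ k, U k i * U k j = (∑ k, W k i * W k j) / (r i * r j) := by
          rw [Finset.sum_div]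
          refine Finset.sum_congr rfl fun k _ => ?_
          simp [hU]; ring
        rw [hfac, horth i j hij, zero_div]
        simp [Matrix.one_apply, hij]
    have : U.det ^ 2 = 1 := by rw [← hGdet, hG1, Matrix.det_one]
    have habs1 : |U.det| = 1 := by nlinarith [abs_nonneg U.det, sq_abs U.det]
    rw [hcW, habs1, Real.log_one, neg_zero]

/-- **Properties of the global IMA contrast.**
For a `C¹` map `f` with everywhere invertible Jacobian and a probability measure `μ`,
the global IMA contrast is nonnegative, and it vanishes if and only if for `μ`-almost
every `s` the columns of the Jacobian `J_f(s)` are pairwise orthogonal. -/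
theorem globalIMAContrast_nonneg_and_eq_zero_iff_ae_orthogonal_columns
    {n : ℕ} (f : (Fin n → ℝ) → (Fin n → ℝ)) (μ : Measure (Fin n → ℝ))
    [IsProbabilityMeasure μ]
    (hf : ContDiff ℝ 1 f) (hJ : ∀ s, IsUnit (jacobian f s).det) :
    0 ≤ globalIMAContrast f μ ∧
      (globalIMAContrast f μ = 0 ↔
        ∀ᵐ s ∂μ, ∀ i j : Fin n, i ≠ j →
          (∑ k, jacobian f s k i * jacobian f s k j) = 0) := by
  have hdet : ∀ s, (jacobian f s).det ≠ 0 := fun s => (hJ s).ne_zero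
  -- continuity of the entries of the Jacobian
  have hentry : ∀ i j, Continuous (fun s => jacobian f s i j) := by
    intro i j
    have h1 : Continuous (fun s => fderiv ℝ f s) := hf.continuous_fderiv one_ne_zero
    have h2 : Continuous (fun s => fderiv ℝ f s (Pi.single j 1)) :=
      h1.clm_apply continuous_const
    exact (continuous_apply i).comp h2
  have hdetc : Continuous (fun s => (jacobian f s).det) := by
    apply Continuous.matrix_det
    exact continuous_matrix fun i j => hentry i j
  have hcn : ∀ i, Continuous (fun s => columnNorm (jacobian f s) i) := by
    intro i
    apply Real.continuous_sqrt.comp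
    exact continuous_finset_sum _ fun k _ => (hentry k i).pow 2
  have hcnpos : ∀ s i, 0 < columnNorm (jacobian f s) i := by
    intro s i
    have hcol : ∃ j, jacobian f s j i ≠ 0 := by
      by_contra hc
      push_neg at hc
      exact hdet s (Matrix.det_eq_zero_of_column_eq_zero i hc)
    obtain ⟨j, hj⟩ := hcol
    exact Real.sqrt_pos.mpr (Finset.sum_pos' (fun k _ => sq_nonneg _)
      ⟨j, Finset.mem_univ j, by positivity⟩)
  have hg : Continuous (fun s => localIMAContrast (jacobian f s)) := by
    unfold localIMAContrast
    refine Continuous.sub ?_ ?_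
    · exact continuous_finset_sum _ fun i _ => (hcn i).log (fun s => (hcnpos s i).ne')
    · exact hdetc.abs.log (fun s => abs_ne_zero.mpr (hdet s))
  have hnn : ∀ s, 0 ≤ localIMAContrast (jacobian f s) := fun s =>
    (local_key _ (hdet s)).1
  refine ⟨zero_le, ?_⟩
  rw [globalIMAContrast, lintegral_eq_zero_iff (hg.measurable.ennreal_ofReal)]
  constructor
  · intro h
    filter_upwards [h] with s hs
    have h0 : localIMAContrast (jacobian f s) = 0 := by
      have := hs
      simp only [Pi.zero_apply, ENNReal.ofReal_eq_zero] at this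
      linarith [hnn s]
    exact (local_key _ (hdet s)).2.mp h0
  · intro h
    filter_upwards [h] with s hs
    simp only [Pi.zero_apply, ENNReal.ofReal_eq_zero]
    exact le_of_eq ((local_key _ (hdet s)).2.mpr hs)
end

section
/- Let f : ℝⁿ → ℝⁿ be continuously differentiable with invertible Jacobian at every point, and let μ be a probability measure on ℝⁿ. Let P be a permutation matrix and let h(s) = (h₁(s₁), …, h_n(s_n)) where each h_i : ℝ → ℝ is a continuously differentiable bijection with nowhere-vanishing derivative and continuously differentiable inverse. Set f̃ := f ∘ h⁻¹ ∘ P⁻¹ and let μ̃ be the pushforward of μ under the map s ↦ P·h(s). Then the global IMA contrasts coincide: C_IMA(f̃, μ̃) = C_IMA(f, μ). In particular, C_IMA is invariant under permutation and invertible elementwise reparametrisation of the sources. -/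
open MeasureTheory
open scoped BigOperators ENNReal

lemma columnNorm_ne_zero_s3 {n : ℕ} {A : Matrix (Fin n) (Fin n) ℝ} (hA : A.det ≠ 0) (j : Fin n) :
    columnNorm A j ≠ 0 := by
  intro h0
  apply hA
  apply Matrix.det_eq_zero_of_column_eq_zero j
  intro i
  have hsum : ∑ k, (A k j) ^ 2 = 0 := by
    have h1 := Real.sqrt_eq_zero'.1 h0
    have hnn : (0:ℝ) ≤ ∑ k, (A k j) ^ 2 := Finset.sum_nonneg fun k _ => sq_nonneg _
    linarith
  have := (Finset.sum_eq_zero_iff_of_nonneg (fun k _ => sq_nonneg (A k j))).1 hsum i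
    (Finset.mem_univ i)
  exact pow_eq_zero_iff (two_ne_zero) |>.1 this

lemma contrast_scale_perm {n : ℕ} (A B : Matrix (Fin n) (Fin n) ℝ) (τ : Equiv.Perm (Fin n))
    (e : Fin n → ℝ) (he : ∀ j, e j ≠ 0) (hA : A.det ≠ 0)
    (hAB : ∀ i j, A i j = e j * B i (τ j)) :
    localIMAContrast A = localIMAContrast B := by
  have hQ : A = B * ((τ⁻¹ : Equiv.Perm (Fin n)).permMatrix ℝ * Matrix.diagonal e) := by
    ext i k
    rw [← Matrix.mul_assoc, Matrix.mul_diagonal, Equiv.Perm.permMatrix,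
      PEquiv.mul_toMatrix_toPEquiv, Matrix.submatrix_apply, hAB]
    have : (τ⁻¹ : Equiv.Perm (Fin n)).symm k = τ k := rfl
    rw [this, id, mul_comm]
  -- determinant relation
  have hdet : A.det = B.det * ((Equiv.Perm.sign τ⁻¹ : ℤ) * ∏ j, e j) := by
    rw [hQ, Matrix.det_mul, Matrix.det_mul, Matrix.det_permutation, Matrix.det_diagonal]
  have hprod : (∏ j, e j) ≠ 0 := Finset.prod_ne_zero_iff.2 fun j _ => he j
  have hB : B.det ≠ 0 := by
    intro h0; apply hA; rw [hdet, h0, zero_mul]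
  have habsdet : |A.det| = |B.det| * ∏ j, |e j| := by
    rw [hdet, abs_mul, abs_mul]
    have : |((Equiv.Perm.sign τ⁻¹ : ℤ) : ℝ)| = 1 := by
      rcases Int.units_eq_one_or (Equiv.Perm.sign τ⁻¹) with h | h <;> simp [h]
    rw [this, one_mul, Finset.abs_prod]
  -- column norm relation
  have hcol : ∀ j, columnNorm A j = |e j| * columnNorm B (τ j) := by
    intro j
    unfold columnNorm
    have : ∀ i : Fin n, (A i j) ^ 2 = (e j) ^ 2 * (B i (τ j)) ^ 2 := by
      intro i; rw [hAB]; ring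
    simp_rw [this, ← Finset.mul_sum]
    rw [Real.sqrt_mul (sq_nonneg _), Real.sqrt_sq_eq_abs]
  have hcolB : ∀ j, columnNorm B j ≠ 0 := columnNorm_ne_zero_s3 hB
  have hcolA : ∀ j, columnNorm A j ≠ 0 := columnNorm_ne_zero_s3 hA
  unfold localIMAContrast
  have hsum : ∑ j, Real.log (columnNorm A j)
      = (∑ j, Real.log |e j|) + ∑ j, Real.log (columnNorm B j) := by
    calc ∑ j, Real.log (columnNorm A j)
        = ∑ j, (Real.log |e j| + Real.log (columnNorm B (τ j))) := by
          refine Finset.sum_congr rfl fun j _ => ?_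
          rw [hcol j, Real.log_mul (abs_ne_zero.2 (he j)) (hcolB (τ j))]
      _ = (∑ j, Real.log |e j|) + ∑ j, Real.log (columnNorm B (τ j)) :=
          Finset.sum_add_distrib
      _ = (∑ j, Real.log |e j|) + ∑ j, Real.log (columnNorm B j) := by
          rw [Equiv.sum_comp τ (fun j => Real.log (columnNorm B j))]
  have hlogdet : Real.log |A.det| = Real.log |B.det| + ∑ j, Real.log |e j| := by
    have hpe : (∏ j, |e j|) ≠ 0 := Finset.prod_ne_zero_iff.2 fun j _ => abs_ne_zero.2 (he j)
    rw [habsdet, Real.log_mul (abs_ne_zero.2 hB) hpe,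
      Real.log_prod fun j _ => abs_ne_zero.2 (he j)]
  rw [hsum, hlogdet]
  ring

/-- **Invariance of the global IMA contrast under permutation and invertible elementwise
reparametrisation of the sources.**
Let `f : ℝⁿ → ℝⁿ` be `C¹` with everywhere invertible Jacobian and `μ` a probability
measure on `ℝⁿ`. Let `σ` encode a permutation matrix `P` (acting by `(P·s)_i = s_{σ i}`)
and let `h` be an invertible elementwise map with components `h i : ℝ → ℝ`, each a `C¹`
bijection with nowhere-vanishing derivative and `C¹` inverse `hinv i`.
Then for `f̃ = f ∘ h⁻¹ ∘ P⁻¹` and `μ̃` the pushforward of `μ` under `s ↦ P·h(s)`,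
the global IMA contrasts coincide: `C_IMA(f̃, μ̃) = C_IMA(f, μ)`. -/
theorem globalIMAContrast_invariant_perm_elementwise
    {n : ℕ} (f : (Fin n → ℝ) → (Fin n → ℝ)) (μ : Measure (Fin n → ℝ))
    [IsProbabilityMeasure μ]
    (hf : ContDiff ℝ 1 f) (hJ : ∀ s, IsUnit (jacobian f s).det)
    (σ : Equiv.Perm (Fin n))
    (h hinv : Fin n → ℝ → ℝ)
    (hhC : ∀ i, ContDiff ℝ 1 (h i))
    (hhbij : ∀ i, Function.Bijective (h i))
    (hhderiv : ∀ i t, deriv (h i) t ≠ 0)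
    (hinvC : ∀ i, ContDiff ℝ 1 (hinv i))
    (hlinv : ∀ i, Function.LeftInverse (hinv i) (h i))
    (hrinv : ∀ i, Function.RightInverse (hinv i) (h i)) :
    globalIMAContrast (fun z => f fun i => hinv i (z (σ⁻¹ i)))
        (Measure.map (fun s => fun i => h (σ i) (s (σ i))) μ) =
      globalIMAContrast f μ := by
  classical
  set ft : (Fin n → ℝ) → (Fin n → ℝ) := fun z => f fun i => hinv i (z (σ⁻¹ i)) with hft
  set T : (Fin n → ℝ) → (Fin n → ℝ) := fun s => fun i => h (σ i) (s (σ i)) with hT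
  -- smoothness
  have hgC : ContDiff ℝ 1 (fun z : Fin n → ℝ => fun i => hinv i (z (σ⁻¹ i))) :=
    contDiff_pi.2 fun i => (hinvC i).comp
      ((ContinuousLinearMap.proj (σ⁻¹ i) : (Fin n → ℝ) →L[ℝ] ℝ).contDiff)
  have hftC : ContDiff ℝ 1 ft := hf.comp hgC
  have hTC : ContDiff ℝ 1 T :=
    contDiff_pi.2 fun i => (hhC (σ i)).comp
      ((ContinuousLinearMap.proj (σ i) : (Fin n → ℝ) →L[ℝ] ℝ).contDiff)
  have hmT : Measurable T := hTC.continuous.measurable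
  -- measurability of the integrand
  have hcfd : Continuous (fderiv ℝ ft) := hftC.continuous_fderiv one_ne_zero
  have hcJ : ∀ i j : Fin n, Continuous fun z => jacobian ft z i j := by
    intro i j
    have : Continuous fun z => fderiv ℝ ft z (Pi.single j 1) :=
      hcfd.clm_apply continuous_const
    exact (continuous_apply i).comp this
  have hmInt : Measurable fun z => ENNReal.ofReal (localIMAContrast (jacobian ft z)) := by
    apply ENNReal.measurable_ofReal.comp
    unfold localIMAContrast
    apply Measurable.sub
    · apply Finset.measurable_sum
      intro i _
      apply Real.measurable_log.comp
      unfold columnNorm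
      exact (Real.continuous_sqrt.comp (continuous_finset_sum _ fun j _ =>
        (hcJ j i).pow 2)).measurable
    · apply Real.measurable_log.comp
      exact ((continuous_matrix hcJ).matrix_det.abs).measurable
  -- change of variables
  rw [globalIMAContrast, globalIMAContrast, lintegral_map hmInt hmT]
  refine lintegral_congr fun s => ?_
  congr 1
  -- pointwise equality of contrasts
  have hdet : (jacobian f s).det ≠ 0 := (hJ s).ne_zero
  -- identity f = ft ∘ T
  have hfteq : f = ft ∘ T := by
    funext s'
    have key : (fun i => hinv i (T s' (σ⁻¹ i))) = s' := by
      funext i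
      simp only [hT]
      rw [Equiv.Perm.coe_inv, Equiv.apply_symm_apply, hlinv i (s' i)]
    calc f s' = f (fun i => hinv i (T s' (σ⁻¹ i))) := by rw [key]
      _ = (ft ∘ T) s' := rfl
  -- derivative of T
  set L : (Fin n → ℝ) →L[ℝ] (Fin n → ℝ) :=
    ContinuousLinearMap.pi fun i =>
      (deriv (h (σ i)) (s (σ i))) • (ContinuousLinearMap.proj (σ i)) with hL
  have hT_fd : HasFDerivAt T L s := by
    apply hasFDerivAt_pi.2
    intro i
    have hd : HasDerivAt (h (σ i)) (deriv (h (σ i)) (s (σ i))) (s (σ i)) :=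
      (((hhC (σ i)).differentiable one_ne_zero) (s (σ i))).hasDerivAt
    exact hd.comp_hasFDerivAt s (hasFDerivAt_apply (σ i) s)
  have hdiff_ft : DifferentiableAt ℝ ft (T s) := (hftC.differentiable one_ne_zero) (T s)
  have hfd_f : HasFDerivAt f ((fderiv ℝ ft (T s)).comp L) s := by
    rw [hfteq]
    exact hdiff_ft.hasFDerivAt.comp s hT_fd
  have hfderiv : fderiv ℝ f s = (fderiv ℝ ft (T s)).comp L := hfd_f.fderiv
  -- evaluate L on basis vectors
  have hLsingle : ∀ j : Fin n,
      L (Pi.single j 1) = (deriv (h j) (s j)) • (Pi.single (σ⁻¹ j) 1 : Fin n → ℝ) := by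
    intro j
    funext i
    simp only [hL, ContinuousLinearMap.pi_apply, ContinuousLinearMap.smul_apply,
      ContinuousLinearMap.proj_apply, Pi.smul_apply, smul_eq_mul]
    by_cases hi : σ i = j
    · subst hi
      rw [Equiv.Perm.coe_inv, Equiv.symm_apply_apply, Pi.single_eq_same, Pi.single_eq_same, mul_one]
    · have hi' : i ≠ σ⁻¹ j := fun hc => hi (by rw [hc]; simp)
      rw [Pi.single_eq_of_ne hi, Pi.single_eq_of_ne hi']
      ring
  have hAB : ∀ i j, jacobian f s i j
      = deriv (h j) (s j) * jacobian ft (T s) i (σ⁻¹ j) := by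
    intro i j
    show fderiv ℝ f s (Pi.single j 1) i
        = deriv (h j) (s j) * fderiv ℝ ft (T s) (Pi.single (σ⁻¹ j) 1) i
    rw [hfderiv, ContinuousLinearMap.comp_apply, hLsingle j,
      ContinuousLinearMap.map_smul]
    simp
  exact (contrast_scale_perm (jacobian f s) (jacobian ft (T s)) σ⁻¹
    (fun j => deriv (h j) (s j)) (fun j => hhderiv j (s j)) hdet hAB).symm
end

section
/- Let ν be a probability measure on ℝⁿ for which the coordinate projections are not all independent: there exist i ≠ j such that the random variables X_i(x) = x_i and X_j(x) = x_j are not independent under ν. Let g : ℝⁿ → (0,1)ⁿ be a C¹ diffeomorphism onto (0,1)ⁿ whose Jacobian matrix is lower triangular and invertible at every point, and suppose the pushforward of ν under g is the uniform probability distribution on (0,1)ⁿ (as is the case for the Darmois construction). Then C_IMA(g⁻¹, Unif((0,1)ⁿ)) > 0. In particular, any solution with vanishing IMA contrast can be distinguished from such a Darmois solution on the basis of the contrast C_IMA. -/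
open MeasureTheory
open scoped BigOperators ENNReal

/-- The open unit cube `(0,1)ⁿ` in `ℝⁿ`. -/
def unitCube (n : ℕ) : Set (Fin n → ℝ) :=
  Set.univ.pi fun _ : Fin n => Set.Ioo (0 : ℝ) 1

lemma columnNorm_pos {n : ℕ} {B : Matrix (Fin n) (Fin n) ℝ} (hdet : B.det ≠ 0) (i : Fin n) :
    0 < columnNorm B i := by
  rw [columnNorm, Real.sqrt_pos]
  rcases (Finset.sum_nonneg (fun j _ => sq_nonneg (B j i))).lt_or_eq with h | h
  · exact h
  · exfalso
    apply hdet
    apply Matrix.det_eq_zero_of_column_eq_zero i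
    intro a
    have := (Finset.sum_eq_zero_iff_of_nonneg (fun j _ => sq_nonneg (B j i))).1 h.symm a
      (Finset.mem_univ a)
    exact pow_eq_zero_iff (two_ne_zero) |>.1 this

lemma abs_diag_le_columnNorm {n : ℕ} (B : Matrix (Fin n) (Fin n) ℝ) (i : Fin n) :
    |B i i| ≤ columnNorm B i := by
  rw [columnNorm, ← Real.sqrt_sq_eq_abs]
  exact Real.sqrt_le_sqrt (Finset.single_le_sum (fun j _ => sq_nonneg (B j i)) (Finset.mem_univ i))

lemma det_lowerTri {n : ℕ} {B : Matrix (Fin n) (Fin n) ℝ}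
    (htri : ∀ a b : Fin n, a < b → B a b = 0) : B.det = ∏ i, B i i :=
  Matrix.det_of_lowerTriangular B (fun a b hab => htri a b hab)

lemma localIMAContrast_eq_sum {n : ℕ} {B : Matrix (Fin n) (Fin n) ℝ}
    (htri : ∀ a b : Fin n, a < b → B a b = 0) (hdet : B.det ≠ 0) :
    localIMAContrast B = ∑ i, (Real.log (columnNorm B i) - Real.log |B i i|) := by
  have hprod : B.det = ∏ i, B i i := det_lowerTri htri
  have hne : ∀ i ∈ Finset.univ, |B i i| ≠ (0:ℝ) := by
    intro a _
    have : B a a ≠ 0 := by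
      intro h0
      apply hdet
      rw [hprod]
      exact Finset.prod_eq_zero (Finset.mem_univ a) h0
    simpa using this
  rw [localIMAContrast, hprod, Finset.abs_prod, Real.log_prod hne,
    Finset.sum_sub_distrib]

lemma term_nonneg {n : ℕ} {B : Matrix (Fin n) (Fin n) ℝ}
    (htri : ∀ a b : Fin n, a < b → B a b = 0) (hdet : B.det ≠ 0) (i : Fin n) :
    0 ≤ Real.log (columnNorm B i) - Real.log |B i i| := by
  have hpos : (0:ℝ) < |B i i| := by
    have : B i i ≠ 0 := by
      intro h0
      exact hdet (by rw [det_lowerTri htri]; exact Finset.prod_eq_zero (Finset.mem_univ i) h0)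
    positivity
  have := Real.log_le_log hpos (abs_diag_le_columnNorm B i)
  linarith

lemma localIMAContrast_nonneg {n : ℕ} {B : Matrix (Fin n) (Fin n) ℝ}
    (htri : ∀ a b : Fin n, a < b → B a b = 0) (hdet : B.det ≠ 0) :
    0 ≤ localIMAContrast B := by
  rw [localIMAContrast_eq_sum htri hdet]
  exact Finset.sum_nonneg fun i _ => term_nonneg htri hdet i

lemma offdiag_zero_of_contrast_zero {n : ℕ} {B : Matrix (Fin n) (Fin n) ℝ}
    (htri : ∀ a b : Fin n, a < b → B a b = 0) (hdet : B.det ≠ 0)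
    (hzero : localIMAContrast B = 0) :
    ∀ a b : Fin n, a ≠ b → B a b = 0 := by
  intro a b hab
  rw [localIMAContrast_eq_sum htri hdet] at hzero
  have heach := (Finset.sum_eq_zero_iff_of_nonneg
    (fun i _ => term_nonneg htri hdet i)).1 hzero b (Finset.mem_univ b)
  have hBbb : (0:ℝ) < |B b b| := by
    have : B b b ≠ 0 := by
      intro h0
      exact hdet (by rw [det_lowerTri htri]; exact Finset.prod_eq_zero (Finset.mem_univ b) h0)
    positivity
  have hcolpos := columnNorm_pos hdet b
  have hlogeq : Real.log (columnNorm B b) = Real.log |B b b| := by linarith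
  have hcoleq : columnNorm B b = |B b b| := by
    have := congrArg Real.exp hlogeq
    rwa [Real.exp_log hcolpos, Real.exp_log hBbb] at this
  have hsq : ∑ j, (B j b) ^ 2 = (B b b) ^ 2 := by
    have h1 : Real.sqrt (∑ j, (B j b) ^ 2) = |B b b| := hcoleq
    have h2 := congrArg (· ^ 2) h1
    simp only [Real.sq_sqrt (Finset.sum_nonneg (fun j _ => sq_nonneg (B j b))), sq_abs] at h2
    exact h2
  have hrest : ∑ j ∈ Finset.univ.erase b, (B j b) ^ 2 = 0 := by
    have h3 := Finset.add_sum_erase Finset.univ (fun j => (B j b) ^ 2) (Finset.mem_univ b)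
    simp only [hsq] at h3
    linarith
  have := (Finset.sum_eq_zero_iff_of_nonneg (fun j _ => sq_nonneg (B j b))).1 hrest a
    (Finset.mem_erase.2 ⟨hab, Finset.mem_univ a⟩)
  exact pow_eq_zero_iff two_ne_zero |>.1 this


lemma jacobian_eq_toMatrix' {n : ℕ} (f : (Fin n → ℝ) → (Fin n → ℝ)) (s : Fin n → ℝ) :
    jacobian f s = LinearMap.toMatrix' (fderiv ℝ f s : (Fin n → ℝ) →ₗ[ℝ] (Fin n → ℝ)) := by
  ext a b
  simp only [jacobian, Matrix.of_apply, LinearMap.toMatrix'_apply, ContinuousLinearMap.coe_coe]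

lemma jacobian_apply {n : ℕ} (f : (Fin n → ℝ) → (Fin n → ℝ)) (s : Fin n → ℝ)
    (v : Fin n → ℝ) (k : Fin n):
    fderiv ℝ f s v k = ∑ m, v m * jacobian f s k m := by
  have hv : v = ∑ m : Fin n, v m • (Pi.single m (1:ℝ) : Fin n → ℝ) := by
    funext m'
    simp [Finset.sum_apply, Pi.single_apply]
  conv_lhs => rw [hv]
  rw [map_sum]
  simp only [ContinuousLinearMap.map_smul]
  rw [Finset.sum_apply]
  simp [jacobian, mul_comm]


/-- **Darmois solutions have strictly positive IMA contrast.**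
Let `ν` be a probability measure on `ℝⁿ` whose coordinate projections `x ↦ x i` and
`x ↦ x j` are not independent for some `i ≠ j`. Let `g : ℝⁿ → (0,1)ⁿ` be a `C¹`
diffeomorphism onto the open unit cube with lower-triangular invertible Jacobian at
every point whose pushforward of `ν` is the uniform distribution on `(0,1)ⁿ`
(as for the Darmois construction). Then `C_IMA(g⁻¹, Unif((0,1)ⁿ)) > 0`. -/
theorem globalIMAContrast_pos_of_darmois
    {n : ℕ} (ν : Measure (Fin n → ℝ)) [IsProbabilityMeasure ν]
    (i j : Fin n) (hij : i ≠ j)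
    (hdep : ¬ ProbabilityTheory.IndepFun (fun x : Fin n → ℝ => x i)
      (fun x : Fin n → ℝ => x j) ν)
    (g ginv : (Fin n → ℝ) → (Fin n → ℝ))
    (hg : ContDiff ℝ 1 g)
    (hgtri : ∀ x, ∀ a b : Fin n, a < b → jacobian g x a b = 0)
    (hgJ : ∀ x, IsUnit (jacobian g x).det)
    (hginj : Function.Injective g)
    (hgrange : Set.range g = unitCube n)
    (hginv : Function.LeftInverse ginv g)
    (hginvC : ContDiffOn ℝ 1 ginv (unitCube n))
    (hpush : Measure.map g ν = volume.restrict (unitCube n)) :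
    0 < globalIMAContrast ginv (volume.restrict (unitCube n)) := by
  classical
  have hcubeOpen : IsOpen (unitCube n) :=
    isOpen_set_pi Set.finite_univ (fun a _ => isOpen_Ioo)
  have hcubeMeas : MeasurableSet (unitCube n) := hcubeOpen.measurableSet
  have hconv : Convex ℝ (unitCube n) := convex_pi (fun a _ => convex_Ioo 0 1)
  have hgcont : Continuous g := hg.continuous
  have hgmeas : Measurable g := hgcont.measurable
  have hmem : ∀ x, g x ∈ unitCube n := fun x => hgrange ▸ Set.mem_range_self x
  have hdiff_ginv : ∀ y ∈ unitCube n, DifferentiableAt ℝ ginv y := fun y hy =>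
    ((hginvC.differentiableOn one_ne_zero) y hy).differentiableAt (hcubeOpen.mem_nhds hy)
  -- matrix identity : jacobian ginv (g x) * jacobian g x = 1
  have hmatmul : ∀ x, jacobian ginv (g x) * jacobian g x = 1 := by
    intro x
    have hgd : DifferentiableAt ℝ g x := hg.differentiable one_ne_zero x
    have hid : (ginv ∘ g) = id := funext hginv
    have hcomp := fderiv_comp x (hdiff_ginv _ (hmem x)) hgd
    rw [hid, fderiv_id] at hcomp
    have hmat : LinearMap.toMatrix'
        (((fderiv ℝ ginv (g x)).comp (fderiv ℝ g x) : (Fin n → ℝ) →L[ℝ] (Fin n → ℝ)) :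
          (Fin n → ℝ) →ₗ[ℝ] (Fin n → ℝ)) = 1 := by
      rw [← hcomp]
      simp [LinearMap.toMatrix'_id]
    rw [ContinuousLinearMap.toLinearMap_comp, LinearMap.toMatrix'_comp] at hmat
    rw [jacobian_eq_toMatrix', jacobian_eq_toMatrix']
    exact hmat
  -- triangular facts
  have htridet : ∀ y ∈ unitCube n,
      (∀ a b : Fin n, a < b → jacobian ginv y a b = 0) ∧ (jacobian ginv y).det ≠ 0 := by
    intro y hy
    have : y ∈ Set.range g := hgrange ▸ hy
    obtain ⟨x, rfl⟩ := this
    have hmul := hmatmul x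
    have hdetmul : (jacobian ginv (g x)).det * (jacobian g x).det = 1 := by
      rw [← Matrix.det_mul, hmul, Matrix.det_one]
    have hdetne : (jacobian ginv (g x)).det ≠ 0 := left_ne_zero_of_mul_eq_one hdetmul
    refine ⟨?_, hdetne⟩
    haveI : Invertible (jacobian g x) := (jacobian g x).invertibleOfIsUnitDet (hgJ x)
    have hBT : (jacobian g x).BlockTriangular (OrderDual.toDual : Fin n → (Fin n)ᵒᵈ) := by
      intro a b hab
      exact hgtri x a b hab
    have hBTinv := Matrix.blockTriangular_inv_of_blockTriangular hBT
    have hBeq : jacobian ginv (g x) = (jacobian g x)⁻¹ := (Matrix.inv_eq_left_inv hmul).symm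
    intro a b hab
    rw [hBeq]
    exact hBTinv hab
  -- continuity of the contrast on the cube
  have hcontrast : ContinuousOn (fun y => localIMAContrast (jacobian ginv y)) (unitCube n) := by
    have hfder : ContinuousOn (fun y => fderiv ℝ ginv y) (unitCube n) :=
      hginvC.continuousOn_fderiv_of_isOpen hcubeOpen le_rfl
    have hentry : ∀ a b : Fin n, ContinuousOn (fun y => jacobian ginv y a b) (unitCube n) := by
      intro a b
      have h1 : Continuous fun (L : (Fin n → ℝ) →L[ℝ] (Fin n → ℝ)) => L (Pi.single b 1) a :=
        (continuous_apply a).comp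
          (ContinuousLinearMap.apply ℝ (Fin n → ℝ) (Pi.single b 1)).continuous
      exact h1.comp_continuousOn hfder
    have hcol : ∀ i0 : Fin n,
        ContinuousOn (fun y => columnNorm (jacobian ginv y) i0) (unitCube n) := by
      intro i0
      have hsum : ContinuousOn (fun y => ∑ m, (jacobian ginv y m i0) ^ 2) (unitCube n) := by
        apply continuousOn_finset_sum
        intro m _
        exact (hentry m i0).pow 2
      exact Real.continuous_sqrt.comp_continuousOn hsum
    have hmatC : ContinuousOn (fun y => jacobian ginv y) (unitCube n) := by
      apply continuousOn_pi.2
      intro a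
      apply continuousOn_pi.2
      intro b
      exact hentry a b
    have hdetC : ContinuousOn (fun y => (jacobian ginv y).det) (unitCube n) :=
      (continuous_id.matrix_det).comp_continuousOn hmatC
    apply ContinuousOn.sub
    · apply continuousOn_finset_sum
      intro i0 _
      exact (hcol i0).log (fun y hy => (columnNorm_pos (htridet y hy).2 i0).ne')
    · exact (hdetC.abs).log (fun y hy => by simpa using (htridet y hy).2)
  -- positivity from a single point
  have hkey : ∀ y₀ ∈ unitCube n, 0 < localIMAContrast (jacobian ginv y₀) →
      0 < globalIMAContrast ginv (volume.restrict (unitCube n)) := by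
    intro y₀ hy₀ hpos
    set ε := localIMAContrast (jacobian ginv y₀) / 2 with hεdef
    have hεpos : 0 < ε := half_pos hpos
    have hcA : ContinuousAt (fun y => localIMAContrast (jacobian ginv y)) y₀ :=
      (hcontrast y₀ hy₀).continuousAt (hcubeOpen.mem_nhds hy₀)
    have hev1 : ∀ᶠ y in nhds y₀, ε < localIMAContrast (jacobian ginv y) :=
      hcA.eventually (eventually_gt_nhds (by rw [hεdef]; linarith))
    have hev2 : ∀ᶠ y in nhds y₀, y ∈ unitCube n := hcubeOpen.mem_nhds hy₀
    obtain ⟨r, hr, hball⟩ := Metric.eventually_nhds_iff_ball.1 (hev1.and hev2)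
    have hle : ∀ s, (Metric.ball y₀ r).indicator (fun _ => ENNReal.ofReal ε) s ≤
        ENNReal.ofReal (localIMAContrast (jacobian ginv s)) := by
      intro s
      by_cases hs : s ∈ Metric.ball y₀ r
      · rw [Set.indicator_of_mem hs]
        exact ENNReal.ofReal_le_ofReal (hball s hs).1.le
      · rw [Set.indicator_of_notMem hs]
        exact zero_le
    have hmono : (∫⁻ s, (Metric.ball y₀ r).indicator (fun _ => ENNReal.ofReal ε) s
          ∂(volume.restrict (unitCube n))) ≤
        globalIMAContrast ginv (volume.restrict (unitCube n)) := lintegral_mono hle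
    rw [lintegral_indicator measurableSet_ball, setLIntegral_const] at hmono
    have hsub : Metric.ball y₀ r ⊆ unitCube n := fun s hs => (hball s hs).2
    have hres : (volume.restrict (unitCube n)) (Metric.ball y₀ r)
        = volume (Metric.ball y₀ r) := by
      rw [Measure.restrict_apply measurableSet_ball, Set.inter_eq_self_of_subset_left hsub]
    rw [hres] at hmono
    refine lt_of_lt_of_le ?_ hmono
    exact ENNReal.mul_pos (ENNReal.ofReal_pos.2 hεpos).ne' (Metric.measure_ball_pos volume y₀ hr).ne'
  by_contra hcon
  have hI : globalIMAContrast ginv (volume.restrict (unitCube n)) = 0 :=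
    le_antisymm (not_lt.1 hcon) zero_le
  have hzero : ∀ y ∈ unitCube n, localIMAContrast (jacobian ginv y) = 0 := by
    intro y hy
    rcases (localIMAContrast_nonneg (htridet y hy).1 (htridet y hy).2).lt_or_eq with h | h
    · exact absurd hI (hkey y hy h).ne'
    · exact h.symm
  have hdiag : ∀ y ∈ unitCube n, ∀ a b : Fin n, a ≠ b → jacobian ginv y a b = 0 :=
    fun y hy => offdiag_zero_of_contrast_zero (htridet y hy).1 (htridet y hy).2 (hzero y hy)
  -- ginv depends on coordinate k only
  have hconst : ∀ k : Fin n, ∀ y ∈ unitCube n, ∀ z ∈ unitCube n, y k = z k →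
      ginv y k = ginv z k := by
    intro k y hy z hz hyz
    set p : ℝ → (Fin n → ℝ) := fun t => y + t • (z - y) with hpdef
    have hpc : ∀ t ∈ Set.Icc (0:ℝ) 1, p t ∈ unitCube n := by
      intro t ht
      have hform : p t = (1 - t) • y + t • z := by
        rw [hpdef]
        simp only [smul_sub, sub_smul, one_smul]
        abel
      rw [hform]
      exact hconv hy hz (by linarith [ht.2]) ht.1 (by ring)
    set u : ℝ → ℝ := fun t => ginv (p t) k with hudef
    have hderiv : ∀ t ∈ Set.Icc (0:ℝ) 1, HasDerivAt u 0 t := by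
      intro t ht
      have hdp : HasDerivAt p (z - y) t := by
        have h1 : HasDerivAt (fun t : ℝ => t • (z - y)) ((1:ℝ) • (z - y)) t :=
          (hasDerivAt_id t).smul_const (z - y)
        have h1' : HasDerivAt (fun t : ℝ => t • (z - y)) (z - y) t := by simpa using h1
        exact h1'.const_add y
      have hdg : HasFDerivAt ginv (fderiv ℝ ginv (p t)) (p t) :=
        (hdiff_ginv _ (hpc t ht)).hasFDerivAt
      have hcmp : HasDerivAt (fun s => ginv (p s)) (fderiv ℝ ginv (p t) (z - y)) t :=
        hdg.comp_hasDerivAt t hdp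
      have hk : HasDerivAt u ((fderiv ℝ ginv (p t) (z - y)) k) t := by
        have h2 := ((ContinuousLinearMap.proj k :
          (Fin n → ℝ) →L[ℝ] ℝ).hasFDerivAt).comp_hasDerivAt t hcmp
        exact h2
      have hval : (fderiv ℝ ginv (p t) (z - y)) k = 0 := by
        rw [jacobian_apply ginv (p t) (z - y) k]
        apply Finset.sum_eq_zero
        intro m _
        rcases eq_or_ne m k with rfl | hmk
        · have : (z - y) m = 0 := by simp [hyz]
          rw [this, zero_mul]
        · rw [hdiag (p t) (hpc t ht) k m (Ne.symm hmk), mul_zero]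
      rwa [hval] at hk
    have hcont : ContinuousOn u (Set.Icc 0 1) :=
      fun t ht => ((hderiv t ht).continuousAt).continuousWithinAt
    have h10 := constant_of_has_deriv_right_zero hcont
      (fun t ht => ((hderiv t (Set.Ico_subset_Icc_self ht)).hasDerivWithinAt)) 1
      (Set.right_mem_Icc.2 zero_le_one)
    have hu1 : u 1 = ginv z k := by
      simp [hudef, hpdef]
    have hu0 : u 0 = ginv y k := by
      simp [hudef, hpdef]
    rw [hu1, hu0] at h10
    exact h10.symm
  -- the factor maps
  set c₀ : Fin n → ℝ := fun _ => (1:ℝ)/2 with hc₀def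
  have hc₀ : ∀ t ∈ Set.Ioo (0:ℝ) 1, ∀ k, Function.update c₀ k t ∈ unitCube n := by
    intro t ht k m _
    rcases eq_or_ne m k with rfl | hmk
    · simpa [Function.update_self] using ht
    · simp only [Function.update_of_ne hmk, hc₀def]
      norm_num
  set H : Fin n → ℝ → ℝ :=
    fun k t => if t ∈ Set.Ioo (0:ℝ) 1 then ginv (Function.update c₀ k t) k else 0 with hHdef
  have hHg : ∀ k x, H k (g x k) = x k := by
    intro k x
    have ht : g x k ∈ Set.Ioo (0:ℝ) 1 := hmem x k (Set.mem_univ k)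
    have := hconst k (Function.update c₀ k (g x k)) (hc₀ _ ht k) (g x) (hmem x)
      (by simp [Function.update_self])
    simp only [hHdef, if_pos ht, this, hginv x]
  have hHmeas : ∀ k, Measurable (H k) := by
    intro k
    have hψ : ContinuousOn (fun t => ginv (Function.update c₀ k t)) (Set.Ioo (0:ℝ) 1) := by
      have hup : ContinuousOn (fun t : ℝ => Function.update c₀ k t) (Set.Ioo (0:ℝ) 1) :=
        Continuous.continuousOn (by fun_prop)
      exact ContinuousOn.comp hginvC.continuousOn hup (fun t ht => hc₀ t ht k)
    have hφ : ContinuousOn (fun t => ginv (Function.update c₀ k t) k) (Set.Ioo (0:ℝ) 1) :=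
      (continuous_apply k).comp_continuousOn hψ
    apply measurable_of_isOpen
    intro U hU
    have hopen : IsOpen (Set.Ioo (0:ℝ) 1 ∩ (fun t => ginv (Function.update c₀ k t) k) ⁻¹' U) :=
      hφ.isOpen_inter_preimage isOpen_Ioo hU
    by_cases h0 : (0:ℝ) ∈ U
    · have hset : H k ⁻¹' U =
          (Set.Ioo (0:ℝ) 1 ∩ (fun t => ginv (Function.update c₀ k t) k) ⁻¹' U) ∪
            (Set.Ioo (0:ℝ) 1)ᶜ := by
        ext t
        by_cases ht : t ∈ Set.Ioo (0:ℝ) 1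
        · simp only [hHdef, Set.mem_preimage, if_pos ht, Set.mem_union, Set.mem_inter_iff,
            Set.mem_compl_iff, ht, not_true, or_false, true_and]
          simp [h0]
        · simp only [hHdef, Set.mem_preimage, if_neg ht, Set.mem_union, Set.mem_inter_iff,
            Set.mem_compl_iff, ht, not_false_iff, or_true, false_and, h0]
          simp [h0]
      rw [hset]
      exact hopen.measurableSet.union measurableSet_Ioo.compl
    · have hset : H k ⁻¹' U =
          Set.Ioo (0:ℝ) 1 ∩ (fun t => ginv (Function.update c₀ k t) k) ⁻¹' U := by
        ext t
        by_cases ht : t ∈ Set.Ioo (0:ℝ) 1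
        · simp only [hHdef, Set.mem_preimage, if_pos ht, Set.mem_inter_iff, ht, true_and]
          simp [h0]
        · simp only [hHdef, Set.mem_preimage, if_neg ht, Set.mem_inter_iff, ht, false_and, h0]
          simp [h0]
      rw [hset]
      exact hopen.measurableSet
  -- conclude independence, contradiction
  apply hdep
  rw [ProbabilityTheory.indepFun_iff_measure_inter_preimage_eq_mul]
  intro A B hA hB
  set A' := H i ⁻¹' A with hA'def
  set B' := H j ⁻¹' B with hB'def
  have hA' : MeasurableSet A' := hHmeas i hA
  have hB' : MeasurableSet B' := hHmeas j hB
  have hpre : ∀ (k : Fin n) (C : Set ℝ),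
      (fun x : Fin n → ℝ => x k) ⁻¹' C = g ⁻¹' ((fun y : Fin n → ℝ => y k) ⁻¹' (H k ⁻¹' C)) := by
    intro k C
    ext x
    simp only [Set.mem_preimage]
    rw [hHg k x]
  have hmap : ∀ S : Set (Fin n → ℝ), MeasurableSet S →
      ν (g ⁻¹' S) = (volume.restrict (unitCube n)) S := by
    intro S hS
    rw [← hpush, Measure.map_apply hgmeas hS]
  have hsingle : ∀ (k : Fin n) (C : Set ℝ), MeasurableSet C →
      (volume.restrict (unitCube n)) ((fun y : Fin n → ℝ => y k) ⁻¹' C)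
        = volume (C ∩ Set.Ioo (0:ℝ) 1) := by
    intro k C hC
    rw [Measure.restrict_apply ((measurable_pi_apply k) hC)]
    have hseteq : (fun y : Fin n → ℝ => y k) ⁻¹' C ∩ unitCube n
        = Set.pi Set.univ (fun m => if m = k then C ∩ Set.Ioo (0:ℝ) 1 else Set.Ioo (0:ℝ) 1) := by
      ext y
      simp only [Set.mem_inter_iff, Set.mem_preimage, unitCube, Set.mem_pi, Set.mem_univ,
        true_implies]
      constructor
      · rintro ⟨h1, h2⟩ m
        by_cases hm : m = k
        · subst hm
          simp [h1, h2 m]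
        · simp [hm, h2 m]
      · intro h
        have hk := h k
        simp only [if_pos rfl] at hk
        refine ⟨hk.1, fun m => ?_⟩
        have hm' := h m
        by_cases hm : m = k
        · subst hm
          exact hk.2
        · simpa [hm] using hm'
    rw [hseteq, volume_pi_pi]
    have hval : ∀ m : Fin n,
        volume (if m = k then C ∩ Set.Ioo (0:ℝ) 1 else Set.Ioo (0:ℝ) 1)
          = if m = k then volume (C ∩ Set.Ioo (0:ℝ) 1) else 1 := by
      intro m
      split <;> simp [Real.volume_Ioo]
    simp only [hval]
    simp [Finset.prod_ite_eq']
  have hpair : (volume.restrict (unitCube n))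
      ((fun y : Fin n → ℝ => y i) ⁻¹' A' ∩ (fun y : Fin n → ℝ => y j) ⁻¹' B')
      = volume (A' ∩ Set.Ioo (0:ℝ) 1) * volume (B' ∩ Set.Ioo (0:ℝ) 1) := by
    rw [Measure.restrict_apply (((measurable_pi_apply i) hA').inter
      ((measurable_pi_apply j) hB'))]
    set F : Fin n → Set ℝ := fun m =>
      if m = i then A' ∩ Set.Ioo (0:ℝ) 1 else if m = j then B' ∩ Set.Ioo (0:ℝ) 1
        else Set.Ioo (0:ℝ) 1 with hFdef
    have hseteq : (fun y : Fin n → ℝ => y i) ⁻¹' A' ∩ (fun y : Fin n → ℝ => y j) ⁻¹' B'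
        ∩ unitCube n = Set.pi Set.univ F := by
      ext y
      simp only [Set.mem_inter_iff, Set.mem_preimage, unitCube, Set.mem_pi, Set.mem_univ,
        true_implies, hFdef]
      constructor
      · rintro ⟨⟨h1, h2⟩, h3⟩ m
        by_cases hmi : m = i
        · subst hmi
          simp [h1, h3 m]
        · by_cases hmj : m = j
          · subst hmj
            simp [hmi, h2, h3 m]
          · simp [hmi, hmj, h3 m]
      · intro h
        have hi' := h i
        have hj' := h j
        simp only [if_pos rfl] at hi'
        rw [if_neg hij.symm, if_pos rfl] at hj'
        refine ⟨⟨hi'.1, hj'.1⟩, fun m => ?_⟩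
        have hm' := h m
        by_cases hmi : m = i
        · subst hmi
          exact hi'.2
        · by_cases hmj : m = j
          · subst hmj
            exact hj'.2
          · simpa [hmi, hmj] using hm'
    rw [hseteq, volume_pi_pi]
    rw [← Finset.mul_prod_erase Finset.univ (fun m => volume (F m)) (Finset.mem_univ i)]
    rw [← Finset.mul_prod_erase (Finset.univ.erase i) (fun m => volume (F m))
      (Finset.mem_erase.2 ⟨hij.symm, Finset.mem_univ j⟩)]
    have hFi : volume (F i) = volume (A' ∩ Set.Ioo (0:ℝ) 1) := by
      simp [hFdef]
    have hFj : volume (F j) = volume (B' ∩ Set.Ioo (0:ℝ) 1) := by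
      rw [hFdef]
      simp [if_neg hij.symm]
    have hrest : ∏ m ∈ (Finset.univ.erase i).erase j, volume (F m) = 1 := by
      apply Finset.prod_eq_one
      intro m hm
      have hmj : m ≠ j := (Finset.mem_erase.1 hm).1
      have hmi : m ≠ i := (Finset.mem_erase.1 (Finset.mem_erase.1 hm).2).1
      rw [hFdef]
      simp only [if_neg hmi, if_neg hmj]
      simp [Real.volume_Ioo]
    rw [hFi, hFj, hrest, mul_one]
  rw [hpre i A, hpre j B, ← Set.preimage_inter,
    hmap _ (((measurable_pi_apply i) hA').inter ((measurable_pi_apply j) hB')),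
    hmap _ ((measurable_pi_apply i) hA'), hmap _ ((measurable_pi_apply j) hB'),
    hpair, hsingle i A' hA', hsingle j B' hB']
end

section
/- Let f : ℝⁿ → ℝⁿ be a smooth conformal map, i.e., at every point s the Jacobian factors as J_f(s) = λ(s)·O(s) where λ(s) ∈ ℝ is a nonzero scalar and O(s) is an orthogonal matrix. Then for every probability measure μ on ℝⁿ one has C_IMA(f, μ) = 0. -/
/-! Scaling an invertible matrix by `l ≠ 0` multiplies each of its `n` column norms by `|l|` and
its `|det|` by `|l| ^ n`, so the local contrast is scale invariant. It vanishes on an orthogonal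
matrix, whose columns are unit vectors and whose determinant is `±1`. Hence the integrand of the
global contrast of a conformal map is identically zero. -/

open MeasureTheory
open scoped BigOperators ENNReal

section

open Matrix

variable {n : ℕ}

theorem columnNorm_smul (l : ℝ) (W : Matrix (Fin n) (Fin n) ℝ) (i : Fin n) :
    columnNorm (l • W) i = |l| * columnNorm W i := by
  simp only [columnNorm, Matrix.smul_apply, smul_eq_mul, mul_pow, ← Finset.mul_sum]
  rw [Real.sqrt_mul (sq_nonneg l), Real.sqrt_sq_eq_abs]

theorem columnNorm_ne_zero_of_det_ne_zero {W : Matrix (Fin n) (Fin n) ℝ} (hW : W.det ≠ 0)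
    (i : Fin n) : columnNorm W i ≠ 0 := by
  intro h
  rw [columnNorm, Real.sqrt_eq_zero (by positivity),
    Finset.sum_eq_zero_iff_of_nonneg fun j _ => sq_nonneg _] at h
  exact hW <| det_eq_zero_of_column_eq_zero i fun j =>
    (pow_eq_zero_iff two_ne_zero).1 (h j (Finset.mem_univ j))

theorem localIMAContrast_smul {l : ℝ} (hl : l ≠ 0) {W : Matrix (Fin n) (Fin n) ℝ}
    (hW : W.det ≠ 0) : localIMAContrast (l • W) = localIMAContrast W := by
  have hcol := columnNorm_ne_zero_of_det_ne_zero hW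
  simp only [localIMAContrast, columnNorm_smul, det_smul, Fintype.card_fin, abs_mul, abs_pow]
  rw [Real.log_mul (by positivity) (abs_ne_zero.2 hW), Real.log_pow]
  simp only [fun i => Real.log_mul (abs_ne_zero.2 hl) (hcol i), Finset.sum_add_distrib,
    Finset.sum_const, Finset.card_univ, Fintype.card_fin, nsmul_eq_mul]
  ring

theorem columnNorm_eq_one_of_transpose_mul_self {O : Matrix (Fin n) (Fin n) ℝ}
    (hO : Oᵀ * O = 1) (i : Fin n) : columnNorm O i = 1 := by
  have h := congrFun (congrFun hO i) i
  simp only [mul_apply, transpose_apply, one_apply_eq] at h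
  simp [columnNorm, sq, h]

theorem abs_det_eq_one_of_transpose_mul_self {O : Matrix (Fin n) (Fin n) ℝ}
    (hO : Oᵀ * O = 1) : |O.det| = 1 := by
  have h : O.det * O.det = 1 := by simpa [det_mul, det_transpose] using congrArg det hO
  nlinarith [abs_mul_abs_self O.det, abs_nonneg O.det]

theorem localIMAContrast_eq_zero_of_transpose_mul_self {O : Matrix (Fin n) (Fin n) ℝ}
    (hO : Oᵀ * O = 1) : localIMAContrast O = 0 := by
  simp [localIMAContrast, columnNorm_eq_one_of_transpose_mul_self hO,
    abs_det_eq_one_of_transpose_mul_self hO]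

end

open Matrix in
theorem globalIMAContrast_eq_zero_of_conformal_general
    {n : ℕ} (f : (Fin n → ℝ) → (Fin n → ℝ))
    (hconf : ∀ s : Fin n → ℝ, ∃ (l : ℝ) (O : Matrix (Fin n) (Fin n) ℝ),
      l ≠ 0 ∧ Oᵀ * O = 1 ∧ jacobian f s = l • O)
    (μ : Measure (Fin n → ℝ)) :
    globalIMAContrast f μ = 0 := by
  have hlocal : ∀ s, localIMAContrast (jacobian f s) = 0 := fun s => by
    obtain ⟨l, O, hl, hO, hJ⟩ := hconf s
    have hdet : O.det ≠ 0 := fun h0 => by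
      simpa [h0] using abs_det_eq_one_of_transpose_mul_self hO
    rw [hJ, localIMAContrast_smul hl hdet, localIMAContrast_eq_zero_of_transpose_mul_self hO]
  simp [globalIMAContrast, hlocal]

open Matrix in
/-- **Conformal maps have vanishing global IMA contrast.**
If `f : ℝⁿ → ℝⁿ` is a smooth conformal map, i.e. at every point `s` its Jacobian
factors as `J_f(s) = λ(s) • O(s)` with `λ(s) ≠ 0` a scalar and `O(s)` orthogonal,
then `C_IMA(f, μ) = 0` for every probability measure `μ` on `ℝⁿ`. -/
theorem globalIMAContrast_eq_zero_of_conformal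
    {n : ℕ} (f : (Fin n → ℝ) → (Fin n → ℝ))
    (hf : ContDiff ℝ 1 f)
    (hconf : ∀ s : Fin n → ℝ, ∃ (l : ℝ) (O : Matrix (Fin n) (Fin n) ℝ),
      l ≠ 0 ∧ Oᵀ * O = 1 ∧ jacobian f s = l • O)
    (μ : Measure (Fin n → ℝ)) [IsProbabilityMeasure μ] :
    globalIMAContrast f μ = 0 :=
  globalIMAContrast_eq_zero_of_conformal_general f hconf μ
end

section
/- Let p : ℝⁿ → (0, ∞) be a continuous strictly positive probability density, and for 1 ≤ i ≤ n let p_{1:i}(x₁, …, x_i) := ∫_{ℝ^{n−i}} p(x₁, …, x_i, y) dy denote the marginal density of the first i coordinates (with p_{1:n} := p); assume each p_{1:i} is finite and continuous everywhere. Define the Darmois construction g = (g₁, …, g_n) : ℝⁿ → (0,1)ⁿ by g₁(x) := ∫_{−∞}^{x₁} p_{1:1}(t) dt and, for 2 ≤ i ≤ n, g_i(x) := ( ∫_{−∞}^{x_i} p_{1:i}(x₁, …, x_{i−1}, t) dt ) / p_{1:i−1}(x₁, …, x_{i−1}). Then the pushforward under g of the probability measure on ℝⁿ with density p equals the uniform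 probability distribution on the open unit cube (0,1)ⁿ; in particular, the components of g(X) are jointly independent and each uniform on (0,1). -/
open MeasureTheory
open scoped BigOperators ENNReal Topology
open Set Filter

/-- The marginal density of the first `m` coordinates (0-indexed: coordinates with index
`< m`) of a density `p` on `ℝⁿ`, obtained by integrating out the remaining coordinates:
`marginal p m x = ∫ p(x₀, …, x_{m−1}, y) dy`.  It only depends on the first `m`
coordinates of `x`.  For `m = n` it equals `p`. -/
noncomputable def marginalDensity {n : ℕ} (p : (Fin n → ℝ) → ℝ) (m : ℕ)
    (x : Fin n → ℝ) : ℝ :=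
  ∫ y : {k : Fin n // m ≤ (k : ℕ)} → ℝ,
    p fun k => if h : (k : ℕ) < m then x k else y ⟨k, not_lt.mp h⟩

/-- The Darmois construction `g : ℝⁿ → (0,1)ⁿ` associated with a density `p`:
`g_i(x)` is the conditional CDF of the `i`-th coordinate given the previous ones,
`g_i(x) = (∫_{−∞}^{x_i} p_{1:i}(x₁,…,x_{i−1},t) dt) / p_{1:i−1}(x₁,…,x_{i−1})`. -/
noncomputable def darmois {n : ℕ} (p : (Fin n → ℝ) → ℝ) (x : Fin n → ℝ) : Fin n → ℝ :=
  fun i =>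
    (∫ t in Set.Iic (x i), marginalDensity p ((i : ℕ) + 1) (Function.update x i t)) /
      marginalDensity p (i : ℕ) x

section DarmoisAux


lemma lintegral_pi_subtype {n : ℕ} (m : ℕ) (f : (Fin n → ℝ) → ℝ≥0∞) (hf : Measurable f)
    (x : Fin n → ℝ) :
    ∫⁻ y : {k : Fin n // m ≤ (k : ℕ)} → ℝ,
        f (fun k => if h : (k : ℕ) < m then x k else y ⟨k, le_of_not_gt h⟩)
      = (∫⋯∫⁻_(Finset.univ.filter fun k : Fin n => m ≤ (k : ℕ)), f) x := by
  set S := Finset.univ.filter fun k : Fin n => m ≤ (k : ℕ) with hS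
  have he : ∀ k : Fin n, m ≤ (k : ℕ) ↔ k ∈ S := by intro k; simp [hS]
  set e : {k : Fin n // m ≤ (k : ℕ)} ≃ {k : Fin n // k ∈ S} := Equiv.subtypeEquivRight he
    with hedef
  rw [MeasureTheory.lmarginal]
  have hgm : Measurable fun z : {k : Fin n // k ∈ S} → ℝ =>
      f (Function.updateFinset x S z) := hf.comp measurable_updateFinset
  have hmp := measurePreserving_piCongrLeft
    (fun _ : {k : Fin n // k ∈ S} => (volume : Measure ℝ)) e
  rw [← hmp.lintegral_comp hgm]
  rw [show (Measure.pi fun _ : {k : Fin n // m ≤ (k : ℕ)} => (volume : Measure ℝ))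
      = volume from rfl]
  refine lintegral_congr fun y => ?_
  congr 1
  funext k
  by_cases hk : (k : ℕ) < m
  · rw [dif_pos hk]
    have hkS : k ∉ S := fun h => absurd ((he k).2 h) (not_le.2 hk)
    simp [Function.updateFinset, hkS]
  · have hk' : m ≤ (k : ℕ) := le_of_not_gt hk
    have hkS : k ∈ S := (he k).1 hk'
    rw [dif_neg hk]
    have h1 : (⟨k, hkS⟩ : {k : Fin n // k ∈ S}) = e ⟨k, hk'⟩ := rfl
    simp only [Function.updateFinset, dif_pos hkS]
    rw [h1, MeasurableEquiv.coe_piCongrLeft, Equiv.piCongrLeft_apply_apply]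


lemma darmois_oneDim {f : ℝ → ℝ} (hc : Continuous f) (hpos : ∀ t, 0 < f t)
    (hi : Integrable f) (b : ℝ) :
    ∫⁻ t, (if (∫ s in Set.Iic t, f s) / (∫ s, f s) ≤ b then (1 : ℝ≥0∞) else 0)
        * ENNReal.ofReal (f t)
      = ENNReal.ofReal (∫ s, f s) * ENNReal.ofReal (min b 1) := by
  have hnn : ∀ t, 0 ≤ f t := fun t => (hpos t).le
  have hsupp : Function.support f = Set.univ := Set.eq_univ_of_forall fun t => (hpos t).ne'
  set M := ∫ s, f s with hMdef
  have hMpos : 0 < M := by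
    rw [hMdef, integral_pos_iff_support_of_nonneg hnn hi, hsupp]
    simp
  set G := fun t => ∫ s in Set.Iic t, f s with hGdef
  have hGpos : ∀ t, 0 < G t := by
    intro t
    refine (setIntegral_pos_iff_support_of_nonneg_ae (ae_of_all _ hnn) hi.integrableOn).2 ?_
    rw [hsupp, Set.univ_inter]
    simp [Real.volume_Iic]
  have hGle : ∀ t, G t ≤ M := fun t => setIntegral_le_integral hi (ae_of_all _ hnn)
  have hii : ∀ a c : ℝ, IntervalIntegrable f volume a c := fun a c => hi.intervalIntegrable
  have hGsub : ∀ a c : ℝ, G c - G a = ∫ x in a..c, f x := fun a c =>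
    intervalIntegral.integral_Iic_sub_Iic hi.integrableOn hi.integrableOn
  have hGmono : StrictMono G := by
    intro a c hac
    have h1 := intervalIntegral.intervalIntegral_pos_of_pos (hii a c) hpos hac
    have h2 := hGsub a c
    linarith
  have hGcont : Continuous G := by
    have : G = fun t => G 0 + ∫ x in (0:ℝ)..t, f x := by
      funext t; have := hGsub 0 t; linarith
    rw [this]
    exact continuous_const.add (intervalIntegral.continuous_primitive hii 0)
  have htop : Tendsto G atTop (𝓝 M) :=
    (aecover_Iic tendsto_id).integral_tendsto_of_countably_generated hi
  have hbot : Tendsto G atBot (𝓝 0) := by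
    have h1 : Tendsto (fun t => ∫ x in Set.Ioi t, f x) atBot (𝓝 M) :=
      (aecover_Ioi tendsto_id).integral_tendsto_of_countably_generated hi
    have h2 : ∀ t, G t = M - ∫ x in Set.Ioi t, f x := by
      intro t
      have := integral_add_compl (measurableSet_Iic (a := t)) hi
      rw [compl_Iic] at this
      rw [hGdef, hMdef]
      linarith [this]
    have h3 : Tendsto (fun t => M - ∫ x in Set.Ioi t, f x) atBot (𝓝 (M - M)) :=
      tendsto_const_nhds.sub h1
    rw [sub_self] at h3
    exact h3.congr fun t => (h2 t).symm
  rcases le_or_gt b 0 with hb | hb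
  · have hcond : ∀ t, ¬ ((∫ s in Set.Iic t, f s) / M ≤ b) := fun t =>
      not_le.2 (lt_of_le_of_lt hb (div_pos (hGpos t) hMpos))
    have h0 : ENNReal.ofReal (min b 1) = 0 := by
      rw [ENNReal.ofReal_eq_zero]
      exact le_trans (min_le_left _ _) hb
    simp only [hcond, if_false, zero_mul, lintegral_zero, h0, mul_zero]
  rcases le_or_gt 1 b with hb1 | hb1
  · have hcond : ∀ t, (∫ s in Set.Iic t, f s) / M ≤ b := fun t =>
      le_trans ((div_le_one hMpos).2 (hGle t)) hb1
    have h1 : min b 1 = 1 := min_eq_right hb1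
    simp only [hcond, if_true, one_mul, h1, ENNReal.ofReal_one, mul_one]
    exact (ofReal_integral_eq_lintegral_ofReal hi (ae_of_all _ hnn)).symm
  · -- 0 < b < 1
    have hMb : 0 < M * b := by positivity
    obtain ⟨t1, ht1⟩ := (hbot.eventually_lt_const hMb).exists
    have hMbM : M * b < M := by nlinarith
    obtain ⟨t2, ht2⟩ := (htop.eventually_const_lt hMbM).exists
    have h12 : t1 < t2 := by
      by_contra h
      exact absurd (hGmono.le_iff_le.2 (not_lt.1 h)) (by linarith)
    obtain ⟨t₀, _, ht₀⟩ : ∃ t₀ ∈ Set.Icc t1 t2, G t₀ = M * b :=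
      intermediate_value_Icc h12.le hGcont.continuousOn ⟨ht1.le, ht2.le⟩
    have hset : ∀ t, (G t / M ≤ b ↔ t ≤ t₀) := by
      intro t
      rw [div_le_iff₀ hMpos, mul_comm b M, ← ht₀, hGmono.le_iff_le]
    calc ∫⁻ t, (if G t / M ≤ b then (1 : ℝ≥0∞) else 0) * ENNReal.ofReal (f t)
        = ∫⁻ t, (Set.Iic t₀).indicator (fun t => ENNReal.ofReal (f t)) t := by
          refine lintegral_congr fun t => ?_
          rw [Set.indicator_apply]
          by_cases ht : t ≤ t₀
          · rw [if_pos ((hset t).2 ht), if_pos (Set.mem_Iic.2 ht), one_mul]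
          · rw [if_neg (fun h => ht ((hset t).1 h)), if_neg (fun h => ht (Set.mem_Iic.1 h)),
              zero_mul]
      _ = ∫⁻ t in Set.Iic t₀, ENNReal.ofReal (f t) := lintegral_indicator measurableSet_Iic _
      _ = ENNReal.ofReal (G t₀) :=
          (ofReal_integral_eq_lintegral_ofReal hi.integrableOn (ae_of_all _ hnn)).symm
      _ = ENNReal.ofReal M * ENNReal.ofReal (min b 1) := by
          rw [ht₀, ENNReal.ofReal_mul hMpos.le, min_eq_left hb1.le]

variable {n : ℕ} {p : (Fin n → ℝ) → ℝ}

lemma marginal_congr {m : ℕ} {x x' : Fin n → ℝ} (h : ∀ k : Fin n, (k : ℕ) < m → x k = x' k) :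
    marginalDensity p m x = marginalDensity p m x' := by
  unfold marginalDensity
  congr 1
  funext y
  congr 1
  funext k
  by_cases hk : (k : ℕ) < m
  · simp [hk, h k hk]
  · simp [hk]

lemma marginal_pos (hppos : ∀ x, 0 < p x)
    (hmarg_int : ∀ (m : ℕ), m ≤ n → ∀ x : Fin n → ℝ,
      Integrable fun y : {k : Fin n // m ≤ (k : ℕ)} → ℝ =>
        p fun k => if h : (k : ℕ) < m then x k else y ⟨k, le_of_not_gt h⟩)
    {m : ℕ} (hm : m ≤ n) (x : Fin n → ℝ) : 0 < marginalDensity p m x := by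
  rw [marginalDensity,
    integral_pos_iff_support_of_nonneg (fun y => (hppos _).le) (hmarg_int m hm x)]
  have hsupp : (Function.support fun y : {k : Fin n // m ≤ (k : ℕ)} → ℝ =>
      p fun k => if h : (k : ℕ) < m then x k else y ⟨k, le_of_not_gt h⟩) = Set.univ :=
    Set.eq_univ_of_forall fun y => (hppos _).ne'
  rw [hsupp]
  rw [show (volume : Measure ({k : Fin n // m ≤ (k : ℕ)} → ℝ))
    = Measure.pi fun _ => volume from rfl, Measure.pi_univ]
  simp only [Real.volume_univ, Finset.prod_const]
  exact ENNReal.pow_pos (by simp) _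

lemma ofReal_marginal (hppos : ∀ x, 0 < p x)
    (hmarg_int : ∀ (m : ℕ), m ≤ n → ∀ x : Fin n → ℝ,
      Integrable fun y : {k : Fin n // m ≤ (k : ℕ)} → ℝ =>
        p fun k => if h : (k : ℕ) < m then x k else y ⟨k, le_of_not_gt h⟩)
    (hpmeas : Measurable p) {m : ℕ} (hm : m ≤ n) (x : Fin n → ℝ) :
    ENNReal.ofReal (marginalDensity p m x)
      = (∫⋯∫⁻_(Finset.univ.filter fun k : Fin n => m ≤ (k : ℕ)),
          (fun z => ENNReal.ofReal (p z))) x := by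
  rw [marginalDensity,
    ofReal_integral_eq_lintegral_ofReal (hmarg_int m hm x) (ae_of_all _ fun y => (hppos _).le)]
  exact lintegral_pi_subtype m _ hpmeas.ennreal_ofReal x

lemma darmois_congr {i : Fin n} {x x' : Fin n → ℝ}
    (h : ∀ k : Fin n, (k : ℕ) ≤ (i : ℕ) → x k = x' k) :
    darmois p x i = darmois p x' i := by
  unfold darmois
  rw [h i le_rfl, marginal_congr (fun k hk => h k (by omega))]
  congr 1
  have : ∀ t : ℝ, marginalDensity p ((i : ℕ) + 1) (Function.update x i t)
      = marginalDensity p ((i : ℕ) + 1) (Function.update x' i t) := by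
    intro t
    refine marginal_congr fun k hk => ?_
    by_cases hki : k = i
    · subst hki; simp
    · rw [Function.update_of_ne hki, Function.update_of_ne hki]
      exact h k (by omega)
  simp_rw [this]

lemma measurable_darmois (hmarg_cont : ∀ (m : ℕ), m ≤ n → Continuous (marginalDensity p m)) :
    Measurable (darmois p) := by
  refine measurable_pi_lambda _ fun i => ?_
  have hnum : Measurable fun x : Fin n → ℝ =>
      ∫ t in Set.Iic (x i), marginalDensity p ((i : ℕ) + 1) (Function.update x i t) := by
    have hΦ : Measurable fun z : (Fin n → ℝ) × ℝ =>
        if z.2 ≤ z.1 i then marginalDensity p ((i : ℕ) + 1) (Function.update z.1 i z.2)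
        else 0 := by
      refine Measurable.ite ?_ ?_ measurable_const
      · exact measurableSet_le measurable_snd ((measurable_pi_apply i).comp measurable_fst)
      · exact ((hmarg_cont _ i.isLt).measurable).comp measurable_update'
    have hsm := MeasureTheory.StronglyMeasurable.integral_prod_right' (ν := (volume : Measure ℝ)) hΦ.stronglyMeasurable
    have heq : (fun x : Fin n → ℝ =>
        ∫ t in Set.Iic (x i), marginalDensity p ((i : ℕ) + 1) (Function.update x i t))
        = fun x : Fin n → ℝ => ∫ t : ℝ,
          (if t ≤ x i then marginalDensity p ((i : ℕ) + 1) (Function.update x i t) else 0) := by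
      funext x
      rw [← integral_indicator measurableSet_Iic]
      simp only [Set.indicator_apply, Set.mem_Iic]
    rw [heq]
    exact hsm.measurable
  exact hnum.div ((hmarg_cont i i.isLt.le).measurable)

lemma marginalDensity_self (x : Fin n → ℝ) : marginalDensity p n x = p x := by
  have hie : IsEmpty {k : Fin n // n ≤ (k : ℕ)} := ⟨fun k => absurd k.1.isLt (not_lt.2 k.2)⟩
  rw [marginalDensity]
  have h1 : (fun y : {k : Fin n // n ≤ (k : ℕ)} → ℝ =>
      p fun k => if h : (k : ℕ) < n then x k else y ⟨k, le_of_not_gt h⟩) = fun _ => p x := by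
    funext y
    congr 1
    funext k
    rw [dif_pos k.isLt]
  rw [h1]
  rw [show (volume : Measure ({k : Fin n // n ≤ (k : ℕ)} → ℝ))
    = Measure.pi fun _ => volume from rfl, Measure.pi_of_empty]
  exact integral_dirac _ _

lemma volume_Iic_inter_Ioo (b : ℝ) :
    volume (Set.Iic b ∩ Set.Ioo 0 1) = ENNReal.ofReal (min b 1) := by
  rcases le_or_gt b 0 with hb | hb
  · have : Set.Iic b ∩ Set.Ioo 0 1 = ∅ := by
      ext t; simp only [Set.mem_inter_iff, Set.mem_Iic, Set.mem_Ioo, Set.mem_empty_iff_false,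
        iff_false]
      rintro ⟨h1, h2, h3⟩; linarith
    rw [this, measure_empty, eq_comm, ENNReal.ofReal_eq_zero]
    exact le_trans (min_le_left _ _) hb
  rcases le_or_gt 1 b with hb1 | hb1
  · have : Set.Iic b ∩ Set.Ioo 0 1 = Set.Ioo 0 1 := by
      rw [Set.inter_eq_right]
      intro t ht; exact le_trans ht.2.le hb1
    rw [this, Real.volume_Ioo, min_eq_right hb1]
    norm_num
  · have : Set.Iic b ∩ Set.Ioo 0 1 = Set.Ioc 0 b := by
      ext t; simp only [Set.mem_inter_iff, Set.mem_Iic, Set.mem_Ioo, Set.mem_Ioc]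
      constructor
      · rintro ⟨h1, h2, h3⟩; exact ⟨h2, h1⟩
      · rintro ⟨h1, h2⟩; exact ⟨h2, h1, by linarith⟩
    rw [this, Real.volume_Ioc, min_eq_left hb1.le, sub_zero]

lemma darmois_step (hpcont : Continuous p) (hppos : ∀ x, 0 < p x)
    (hmarg_int : ∀ (m : ℕ), m ≤ n → ∀ x : Fin n → ℝ,
      Integrable fun y : {k : Fin n // m ≤ (k : ℕ)} → ℝ =>
        p fun k => if h : (k : ℕ) < m then x k else y ⟨k, le_of_not_gt h⟩)
    (hmarg_cont : ∀ (m : ℕ), m ≤ n → Continuous (marginalDensity p m))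
    (b : Fin n → ℝ) {m : ℕ} (hmn : m < n)
    (IH : ∀ x : Fin n → ℝ,
      (∫⋯∫⁻_(Finset.univ.filter fun k : Fin n => m + 1 ≤ (k : ℕ)),
        (fun z => ENNReal.ofReal (p z)
          * ∏ i, (if darmois p z i ≤ b i then (1 : ℝ≥0∞) else 0))) x
      = ENNReal.ofReal (marginalDensity p (m + 1) x)
        * (∏ i ∈ (Finset.univ.filter fun k : Fin n => m + 1 ≤ (k : ℕ))ᶜ,
            (if darmois p x i ≤ b i then (1 : ℝ≥0∞) else 0))
        * ∏ i ∈ (Finset.univ.filter fun k : Fin n => m + 1 ≤ (k : ℕ)),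
            ENNReal.ofReal (min (b i) 1))
    (x : Fin n → ℝ) :
    (∫⋯∫⁻_(Finset.univ.filter fun k : Fin n => m ≤ (k : ℕ)),
        (fun z => ENNReal.ofReal (p z)
          * ∏ i, (if darmois p z i ≤ b i then (1 : ℝ≥0∞) else 0))) x
      = ENNReal.ofReal (marginalDensity p m x)
        * (∏ i ∈ (Finset.univ.filter fun k : Fin n => m ≤ (k : ℕ))ᶜ,
            (if darmois p x i ≤ b i then (1 : ℝ≥0∞) else 0))
        * ∏ i ∈ (Finset.univ.filter fun k : Fin n => m ≤ (k : ℕ)),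
            ENNReal.ofReal (min (b i) 1) := by
  set S0 := Finset.univ.filter fun k : Fin n => m ≤ (k : ℕ) with hS0
  set S1 := Finset.univ.filter fun k : Fin n => m + 1 ≤ (k : ℕ) with hS1
  set im : Fin n := ⟨m, hmn⟩ with him
  set F := fun z : Fin n → ℝ => ENNReal.ofReal (p z)
    * ∏ i, (if darmois p z i ≤ b i then (1 : ℝ≥0∞) else 0) with hFdef
  have hF : Measurable F := by
    refine (hpcont.measurable.ennreal_ofReal).mul ?_
    refine Finset.measurable_prod _ fun i _ => Measurable.ite ?_ measurable_const
      measurable_const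
    exact measurableSet_le ((measurable_pi_apply i).comp (measurable_darmois hmarg_cont))
      measurable_const
  have hins : S0 = insert im S1 := by
    ext i
    simp only [hS0, hS1, Finset.mem_filter, Finset.mem_univ, true_and, Finset.mem_insert,
      Fin.ext_iff, him]
    omega
  have him1 : im ∉ S1 := by
    simp [hS1, him]
  have him0 : im ∉ S0ᶜ := by
    simp [hS0, him]
  have hcompl : S1ᶜ = insert im S0ᶜ := by
    ext i
    simp only [hS0, hS1, Finset.mem_compl, Finset.mem_filter, Finset.mem_univ, true_and,
      Finset.mem_insert, Fin.ext_iff, him, not_le]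
    omega
  set q := fun t : ℝ => marginalDensity p (m + 1) (Function.update x im t) with hqdef
  set M := marginalDensity p m x with hMdef
  have hq_cont : Continuous q :=
    (hmarg_cont (m + 1) hmn).comp (continuous_const.update im continuous_id)
  have hq_pos : ∀ t, 0 < q t := fun t => marginal_pos hppos hmarg_int hmn _
  have hM_pos : 0 < M := marginal_pos hppos hmarg_int hmn.le x
  have hgm : Measurable fun z : Fin n → ℝ => ENNReal.ofReal (p z) :=
    hpcont.measurable.ennreal_ofReal
  have h1 : ENNReal.ofReal M = ∫⁻ t, ENNReal.ofReal (q t) := by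
    rw [hMdef, ofReal_marginal hppos hmarg_int hpcont.measurable hmn.le x, ← hS0, hins,
      lmarginal_insert _ hgm him1]
    refine lintegral_congr fun t => ?_
    rw [← ofReal_marginal hppos hmarg_int hpcont.measurable (by omega) (Function.update x im t)]
  have hq_int : Integrable q := by
    refine ⟨hq_cont.aestronglyMeasurable, ?_⟩
    rw [hasFiniteIntegral_iff_ofReal (ae_of_all _ fun t => (hq_pos t).le), ← h1]
    exact ENNReal.ofReal_lt_top
  have hMq : ∫ t, q t = M := by
    have h2 := ofReal_integral_eq_lintegral_ofReal hq_int (ae_of_all _ fun t => (hq_pos t).le)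
    rw [← h1] at h2
    exact (ENNReal.ofReal_eq_ofReal_iff (integral_nonneg fun t => (hq_pos t).le)
      hM_pos.le).1 h2
  set K := ∏ i ∈ S0ᶜ, (if darmois p x i ≤ b i then (1 : ℝ≥0∞) else 0) with hK
  set C1 := ∏ i ∈ S1, ENNReal.ofReal (min (b i) 1) with hC1
  have hKC_ne_top : K * C1 ≠ ⊤ := by
    refine ENNReal.mul_ne_top ?_ ?_
    · refine ne_top_of_le_ne_top ENNReal.one_ne_top (Finset.prod_le_one ?_ ?_)
      · intro i _; positivity
      · intro i _; split <;> simp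
    · exact (ENNReal.prod_lt_top fun i _ => ENNReal.ofReal_lt_top).ne
  calc (∫⋯∫⁻_S0, F) x
      = ∫⁻ t, (∫⋯∫⁻_S1, F) (Function.update x im t) := by
        rw [hins, lmarginal_insert _ hF him1]
    _ = ∫⁻ t, (K * C1) * ((if (∫ s in Set.Iic t, q s) / (∫ s, q s) ≤ b im
          then (1 : ℝ≥0∞) else 0) * ENNReal.ofReal (q t)) := by
        refine lintegral_congr fun t => ?_
        rw [IH (Function.update x im t)]
        have e1 : marginalDensity p (m + 1) (Function.update x im t) = q t := rfl
        have e2 : ∏ i ∈ S1ᶜ, (if darmois p (Function.update x im t) i ≤ b i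
            then (1 : ℝ≥0∞) else 0)
            = (if darmois p (Function.update x im t) im ≤ b im then (1 : ℝ≥0∞) else 0) * K := by
          rw [hcompl, Finset.prod_insert him0]
          congr 1
          refine Finset.prod_congr rfl fun i hi => ?_
          have hi' : (i : ℕ) < m := by
            simp only [hS0, Finset.mem_compl, Finset.mem_filter, Finset.mem_univ, true_and,
              not_le] at hi
            exact hi
          congr 1
          rw [darmois_congr fun k hk => Function.update_of_ne
            (Fin.ne_of_val_ne (show (k : ℕ) ≠ m by omega)) t x]
        have e3 : darmois p (Function.update x im t) im
            = (∫ s in Set.Iic t, q s) / (∫ s, q s) := by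
          rw [darmois]
          have e4 : Function.update x im t im = t := Function.update_self im t x
          have e5 : marginalDensity p ((im : ℕ)) (Function.update x im t) = M := by
            refine marginal_congr fun k hk => Function.update_of_ne
              (Fin.ne_of_val_ne (Nat.ne_of_lt hk)) t x
          rw [e4, e5, ← hMq]
          congr 1
          refine setIntegral_congr_fun measurableSet_Iic fun s _ => ?_
          rw [Function.update_idem]
        rw [e1, e2, e3]
        ring
    _ = (K * C1) * ∫⁻ t, (if (∫ s in Set.Iic t, q s) / (∫ s, q s) ≤ b im
          then (1 : ℝ≥0∞) else 0) * ENNReal.ofReal (q t) :=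
        lintegral_const_mul' _ _ hKC_ne_top
    _ = (K * C1) * (ENNReal.ofReal (∫ s, q s) * ENNReal.ofReal (min (b im) 1)) := by
        rw [darmois_oneDim hq_cont hq_pos hq_int]
    _ = ENNReal.ofReal M * K * ∏ i ∈ S0, ENNReal.ofReal (min (b i) 1) := by
        rw [hMq, hins, Finset.prod_insert him1, ← hC1]
        ring

lemma darmois_claim (hpcont : Continuous p) (hppos : ∀ x, 0 < p x)
    (hmarg_int : ∀ (m : ℕ), m ≤ n → ∀ x : Fin n → ℝ,
      Integrable fun y : {k : Fin n // m ≤ (k : ℕ)} → ℝ =>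
        p fun k => if h : (k : ℕ) < m then x k else y ⟨k, le_of_not_gt h⟩)
    (hmarg_cont : ∀ (m : ℕ), m ≤ n → Continuous (marginalDensity p m))
    (b : Fin n → ℝ) :
    ∀ j, j ≤ n → ∀ x : Fin n → ℝ,
      (∫⋯∫⁻_(Finset.univ.filter fun k : Fin n => n - j ≤ (k : ℕ)),
        (fun z => ENNReal.ofReal (p z)
          * ∏ i, (if darmois p z i ≤ b i then (1 : ℝ≥0∞) else 0))) x
      = ENNReal.ofReal (marginalDensity p (n - j) x)
        * (∏ i ∈ (Finset.univ.filter fun k : Fin n => n - j ≤ (k : ℕ))ᶜ,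
            (if darmois p x i ≤ b i then (1 : ℝ≥0∞) else 0))
        * ∏ i ∈ (Finset.univ.filter fun k : Fin n => n - j ≤ (k : ℕ)),
            ENNReal.ofReal (min (b i) 1) := by
  intro j
  induction j with
  | zero =>
    intro _ x
    have hS : (Finset.univ.filter fun k : Fin n => n - 0 ≤ (k : ℕ)) = ∅ :=
      Finset.filter_eq_empty_iff.2 fun k _ => by have := k.isLt; omega
    rw [hS, lmarginal_empty, Finset.compl_empty, Finset.prod_empty, mul_one,
      Nat.sub_zero, marginalDensity_self]
  | succ j ih =>
    intro hj x
    have h1 : n - j = (n - (j + 1)) + 1 := by omega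
    have hmn : n - (j + 1) < n := by omega
    refine darmois_step hpcont hppos hmarg_int hmarg_cont b hmn (fun y => ?_) x
    have := ih (by omega) y
    rwa [h1] at this

theorem darmois_pushforward_uniform'
    (hpcont : Continuous p)
    (hppos : ∀ x, 0 < p x)
    (hpint : ∫ x, p x = 1)
    (hmarg_int : ∀ (m : ℕ), m ≤ n → ∀ x : Fin n → ℝ,
      Integrable fun y : {k : Fin n // m ≤ (k : ℕ)} → ℝ =>
        p fun k => if h : (k : ℕ) < m then x k else y ⟨k, le_of_not_gt h⟩)
    (hmarg_cont : ∀ (m : ℕ), m ≤ n → Continuous (marginalDensity p m)) :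
    Measure.map (darmois p) (volume.withDensity fun x => ENNReal.ofReal (p x)) =
      volume.restrict (Set.univ.pi fun _ : Fin n => Set.Ioo (0 : ℝ) 1) := by
  classical
  have hpint_int : Integrable p := by
    by_contra h
    rw [integral_undef h] at hpint
    norm_num at hpint
  have hg : Measurable (darmois p) := measurable_darmois hmarg_cont
  have hcube : Measure.pi (fun _ : Fin n => volume.restrict (Set.Ioo 0 1))
      = volume.restrict (Set.univ.pi fun _ : Fin n => Set.Ioo (0 : ℝ) 1) := by
    refine Measure.pi_eq fun s hs => ?_
    rw [Measure.restrict_apply (MeasurableSet.univ_pi hs), ← Set.pi_inter_distrib,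
      volume_pi_pi]
    exact Finset.prod_congr rfl fun i _ =>
      (Measure.restrict_apply (hs i)).symm
  rw [← hcube]
  refine (Measure.pi_eq_generateFrom (fun _ => ?_) (fun _ => isPiSystem_Iic)
    (fun _ => ?_) ?_).symm
  · exact ((BorelSpace.measurable_eq).trans (borel_eq_generateFrom_Iic ℝ)).symm
  · exact
      { set := fun k => Set.Iic (k : ℝ)
        set_mem := fun k => ⟨k, rfl⟩
        finite := fun k => by
          rw [Measure.restrict_apply measurableSet_Iic]
          refine lt_of_le_of_lt (measure_mono Set.inter_subset_right) ?_
          simp [Real.volume_Ioo]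
        spanning := by
          refine Set.iUnion_eq_univ_iff.2 fun t => ?_
          obtain ⟨k, hk⟩ := exists_nat_ge t
          exact ⟨k, hk⟩ }
  · intro s hs
    choose b hb using hs
    have hsm : ∀ i, MeasurableSet (s i) := fun i => (hb i) ▸ measurableSet_Iic
    have hbox : MeasurableSet (Set.pi Set.univ s) := MeasurableSet.univ_pi hsm
    have hR : ∀ i, (volume.restrict (Set.Ioo (0:ℝ) 1)) (s i)
        = ENNReal.ofReal (min (b i) 1) := fun i => by
      rw [← hb i, Measure.restrict_apply measurableSet_Iic, volume_Iic_inter_Ioo]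
    have hRHS : ∏ i, (volume.restrict (Set.Ioo (0:ℝ) 1)) (s i)
        = ∏ i, ENNReal.ofReal (min (b i) 1) := Finset.prod_congr rfl fun i _ => hR i
    rw [hRHS, Measure.map_apply hg hbox, withDensity_apply _ (hg hbox)]
    have hind : ∫⁻ x in darmois p ⁻¹' (Set.pi Set.univ s), ENNReal.ofReal (p x)
        = ∫⁻ x, ENNReal.ofReal (p x)
            * ∏ i, (if darmois p x i ≤ b i then (1 : ℝ≥0∞) else 0) := by
      rw [← lintegral_indicator (hg hbox)]
      refine lintegral_congr fun x => ?_
      rw [Set.indicator_apply]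
      by_cases hx : x ∈ darmois p ⁻¹' Set.pi Set.univ s
      · rw [if_pos hx]
        have hall : ∀ i, darmois p x i ≤ b i := fun i =>
          Set.mem_Iic.1 ((hb i) ▸ hx i (Set.mem_univ i))
        rw [Finset.prod_congr rfl fun i _ => if_pos (hall i), Finset.prod_const_one, mul_one]
      · rw [if_neg hx]
        obtain ⟨i, hi⟩ : ∃ i, ¬ darmois p x i ≤ b i := by
          by_contra hcon
          push_neg at hcon
          exact hx fun i _ => (hb i) ▸ Set.mem_Iic.2 (hcon i)
        rw [show (∏ i, (if darmois p x i ≤ b i then (1 : ℝ≥0∞) else 0)) = 0 from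
          Finset.prod_eq_zero (Finset.mem_univ i) (if_neg hi), mul_zero]
    rw [hind]
    have hclaim := darmois_claim hpcont hppos hmarg_int hmarg_cont b n le_rfl (fun _ => (0:ℝ))
    have hSn : (Finset.univ.filter fun k : Fin n => n - n ≤ (k : ℕ)) = Finset.univ :=
      Finset.filter_true_of_mem fun k _ => by omega
    rw [hSn, lmarginal_univ, Finset.compl_univ, Finset.prod_empty, mul_one] at hclaim
    have h0 : ENNReal.ofReal (marginalDensity p (n - n) (fun _ => (0:ℝ))) = 1 := by
      rw [Nat.sub_self, ofReal_marginal hppos hmarg_int hpcont.measurable (Nat.zero_le n)]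
      have hS0 : (Finset.univ.filter fun k : Fin n => 0 ≤ (k : ℕ)) = Finset.univ :=
        Finset.filter_true_of_mem fun k _ => Nat.zero_le _
      rw [hS0, lmarginal_univ]
      rw [show (Measure.pi fun _ : Fin n => (volume : Measure ℝ))
        = volume from rfl]
      rw [← ofReal_integral_eq_lintegral_ofReal hpint_int (ae_of_all _ fun y => (hppos y).le),
        hpint, ENNReal.ofReal_one]
    rw [h0, one_mul] at hclaim
    rw [show (volume : Measure (Fin n → ℝ)) = Measure.pi fun _ => volume from rfl]
    exact hclaim

end DarmoisAux

/-- **The Darmois construction maps any fully supported law to the uniform law on the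
unit cube.** Let `p` be a continuous strictly positive probability density on `ℝⁿ` whose
marginals are finite (integrable) and continuous. Then the pushforward of the measure
with density `p` under the Darmois construction `g` equals the uniform probability
distribution on `(0,1)ⁿ`; in particular the components of `g(X)` are jointly independent
and uniform on `(0,1)`. -/
theorem darmois_pushforward_uniform
    {n : ℕ} (p : (Fin n → ℝ) → ℝ)
    (hpcont : Continuous p)
    (hppos : ∀ x, 0 < p x)
    (hpint : ∫ x, p x = 1)
    (hmarg_int : ∀ (m : ℕ), m ≤ n → ∀ x : Fin n → ℝ,
      Integrable fun y : {k : Fin n // m ≤ (k : ℕ)} → ℝ =>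
        p fun k => if h : (k : ℕ) < m then x k else y ⟨k, not_lt.mp h⟩)
    (hmarg_cont : ∀ (m : ℕ), m ≤ n → Continuous (marginalDensity p m)) :
    Measure.map (darmois p) (volume.withDensity fun x => ENNReal.ofReal (p x)) =
      volume.restrict (unitCube n) := by
  exact darmois_pushforward_uniform' hpcont hppos hpint hmarg_int hmarg_cont
end

section
/- Let ψ : ℝⁿ → ℝⁿ be a C¹ diffeomorphism and π a permutation of {1, …, n}. Suppose that for every i ∈ {1, …, n} there exist continuously differentiable functions α_i : ℝ → ℝ and β_i : ℝ → ℝ with β_i'(t) ≠ 0 for every t ∈ ℝ, such that α_i(z_{π(i)}) = β_i(ψ_i(z)) for all z ∈ ℝⁿ. Then for every i there exists a function φ_i : ℝ → ℝ such that ψ_i(z) = φ_i(z_{π(i)}) for all z ∈ ℝⁿ; that is, ψ is the composition of the coordinate permutation z ↦ (z_{π(1)}, …, z_{π(n)}) with an elementwise map. -/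
/-!
Since `β_i'` never vanishes, Darboux's theorem makes it of constant sign, so `β_i` is strictly
monotone and hence injective. The identity `α_i(z_{π i}) = β_i(ψ_i(z))` then shows that `ψ_i(z)`
is determined by `z_{π i}`, i.e. `ψ_i` factors through the coordinate projection `z ↦ z_{π i}`.
-/

open Function

theorem injective_of_deriv_ne_zero {f : ℝ → ℝ} (hf : ∀ x, deriv f x ≠ 0) : Injective f := by
  have hderiv : ∀ x ∈ Set.univ, HasDerivWithinAt f (deriv f x) Set.univ x := fun x _ =>
    (differentiableAt_of_deriv_ne_zero (hf x)).hasDerivAt.hasDerivWithinAt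
  rcases hasDerivWithinAt_forall_lt_or_forall_gt_of_forall_ne convex_univ hderiv
    (fun x _ => hf x) with hneg | hpos
  · exact (strictAnti_of_deriv_neg fun x => hneg x trivial).injective
  · exact (strictMono_of_deriv_pos fun x => hpos x trivial).injective

theorem Function.factorsThrough_of_comp_eq {α β γ δ : Sort*} {f : α → β} {g : α → γ}
    {a : β → δ} {b : γ → δ} (hb : Injective b) (h : ∀ x, a (f x) = b (g x)) :
    g.FactorsThrough f :=
  fun x y hxy => hb (by rw [← h, ← h, hxy])

theorem perm_elementwise_of_ratio_identities_general
    {n : ℕ} (ψ : (Fin n → ℝ) → (Fin n → ℝ))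
    (π : Equiv.Perm (Fin n))
    (hratio : ∀ i : Fin n, ∃ α β : ℝ → ℝ,
      ContDiff ℝ 1 α ∧ ContDiff ℝ 1 β ∧ (∀ t, deriv β t ≠ 0) ∧
        ∀ z : Fin n → ℝ, α (z (π i)) = β (ψ z i)) :
    ∀ i : Fin n, ∃ φ : ℝ → ℝ, ∀ z : Fin n → ℝ, ψ z i = φ (z (π i)) := by
  intro i
  obtain ⟨α, β, -, -, hβ', hid⟩ := hratio i
  have hfactors : (ψ · i).FactorsThrough (· (π i)) :=
    factorsThrough_of_comp_eq (injective_of_deriv_ne_zero hβ') hid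
  exact ⟨extend (· (π i)) (ψ · i) 0, fun z => (hfactors.extend_apply 0 z).symm⟩

/-- **A diffeomorphism satisfying the intervention-ratio identities is a permutation
composed with an elementwise map (key step of Theorem 5.3).**
Let `ψ : ℝⁿ → ℝⁿ` be a `C¹` diffeomorphism and `π` a permutation of `{1,…,n}`. If for
every `i` there are continuously differentiable `α_i, β_i : ℝ → ℝ` with `β_i' ≠ 0`
everywhere such that `α_i(z_{π i}) = β_i(ψ_i(z))` for all `z`, then each `ψ_i` depends
only on `z_{π i}`: there are `φ_i : ℝ → ℝ` with `ψ_i(z) = φ_i(z_{π i})` for all `z`. -/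
theorem perm_elementwise_of_ratio_identities
    {n : ℕ} (ψ ψinv : (Fin n → ℝ) → (Fin n → ℝ))
    (hψC : ContDiff ℝ 1 ψ) (hψinvC : ContDiff ℝ 1 ψinv)
    (hψli : Function.LeftInverse ψinv ψ) (hψri : Function.RightInverse ψinv ψ)
    (π : Equiv.Perm (Fin n))
    (hratio : ∀ i : Fin n, ∃ α β : ℝ → ℝ,
      ContDiff ℝ 1 α ∧ ContDiff ℝ 1 β ∧ (∀ t, deriv β t ≠ 0) ∧
        ∀ z : Fin n → ℝ, α (z (π i)) = β (ψ z i)) :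
    ∀ i : Fin n, ∃ φ : ℝ → ℝ, ∀ z : Fin n → ℝ, ψ z i = φ (z (π i)) :=
  perm_elementwise_of_ratio_identities_general ψ π hratio
end

section
/- Let μ and ν be probability measures on ℝⁿ (with the Borel σ-algebra), let π be a permutation of {1, …, n}, and let φ₁, …, φ_n : ℝ → ℝ be homeomorphisms. Define T : ℝⁿ → ℝⁿ by T(v)_i = φ_{π(i)}(v_{π(i)}) (a coordinate permutation composed with an invertible elementwise transformation). Then the Kullback–Leibler divergence is preserved under pushforward by T: klDiv(T_*μ, T_*ν) = klDiv(μ, ν). In particular, causal influences defined as KL divergences between observational and intervened latent distributions are preserved by all reparametrisations within the CRL equivalence class (permutation composed with elementwise invertible transformation). -/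
open MeasureTheory
open scoped ENNReal Classical

/-- The Kullback–Leibler divergence `klDiv(μ, ν) = ∫ log (dμ/dν) dμ ∈ [0, ∞]`,
equal to `+∞` when `μ` is not absolutely continuous with respect to `ν` (or the
log-likelihood ratio is not integrable). -/
noncomputable def klDiv {α : Type*} [MeasurableSpace α] (μ ν : Measure α) : ℝ≥0∞ :=
  if μ ≪ ν ∧ Integrable (llr μ ν) μ then ENNReal.ofReal (∫ x, llr μ ν x ∂μ) else ⊤

/-!
A measurable embedding `f` transports Radon–Nikodym derivatives,
`d(f_*μ)/d(f_*ν) ∘ f = dμ/dν` almost everywhere, hence also the log-likelihood ratio, absolute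
continuity, integrability and the integral: every ingredient of `klDiv`. The map
`v ↦ (i ↦ φ (π i) (v (π i)))` is a measurable equivalence, being coordinatewise homeomorphisms
followed by a permutation of the coordinates.
-/

namespace MeasurableEmbedding

variable {α β : Type*} [MeasurableSpace α] [MeasurableSpace β] {f : α → β} {μ ν : Measure α}

lemma absolutelyContinuous_map_iff (hf : MeasurableEmbedding f) :
    μ.map f ≪ ν.map f ↔ μ ≪ ν := by
  refine ⟨fun h s hνs => ?_, hf.absolutelyContinuous_map⟩
  have hμ := h (s := f '' s) (by rwa [hf.map_apply, hf.injective.preimage_image])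
  rwa [hf.map_apply, hf.injective.preimage_image] at hμ

lemma llr_map_comp_ae_eq (hf : MeasurableEmbedding f) [SigmaFinite μ] [SigmaFinite ν]
    (hμν : μ ≪ ν) :
    (fun x => llr (μ.map f) (ν.map f) (f x)) =ᵐ[μ] llr μ ν := by
  filter_upwards [hμν.ae_le (hf.rnDeriv_map μ ν)] with x hx
  simp only [llr, hx]

lemma klDiv_map (hf : MeasurableEmbedding f) (μ ν : Measure α) [SigmaFinite μ] [SigmaFinite ν] :
    klDiv (μ.map f) (ν.map f) = klDiv μ ν := by
  by_cases hμν : μ ≪ ν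
  · have hllr := hf.llr_map_comp_ae_eq hμν
    have hint : Integrable (llr (μ.map f) (ν.map f)) (μ.map f) ↔ Integrable (llr μ ν) μ := by
      rw [hf.integrable_map_iff]
      exact integrable_congr hllr
    have hintegral : ∫ y, llr (μ.map f) (ν.map f) y ∂(μ.map f) = ∫ x, llr μ ν x ∂μ := by
      rw [hf.integral_map]
      exact integral_congr_ae hllr
    simp only [klDiv, hf.absolutelyContinuous_map_iff, hint, hintegral]
  · simp only [klDiv, hf.absolutelyContinuous_map_iff, hμν, false_and, if_false]

end MeasurableEmbedding

/-- **KL divergence — and hence causal influence — is preserved under permutation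
composed with elementwise invertible reparametrisation.**
Let `μ, ν` be Borel probability measures on `ℝⁿ`, `π` a permutation of `{1,…,n}` and
`φ₁, …, φ_n : ℝ → ℝ` homeomorphisms. For the map `T(v)_i = φ_{π(i)}(v_{π(i)})`,
the KL divergence is preserved under pushforward: `klDiv(T_*μ, T_*ν) = klDiv(μ, ν)`. -/
theorem klDiv_map_perm_elementwise
    {n : ℕ} (μ ν : Measure (Fin n → ℝ))
    [IsProbabilityMeasure μ] [IsProbabilityMeasure ν]
    (π : Equiv.Perm (Fin n)) (φ : Fin n → (ℝ ≃ₜ ℝ)) :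
    klDiv (Measure.map (fun v : Fin n → ℝ => fun i => φ (π i) (v (π i))) μ)
        (Measure.map (fun v : Fin n → ℝ => fun i => φ (π i) (v (π i))) ν) =
      klDiv μ ν := by
  let T : (Fin n → ℝ) ≃ᵐ (Fin n → ℝ) :=
    (MeasurableEquiv.piCongrRight fun i => (φ i).toMeasurableEquiv).trans
      (MeasurableEquiv.arrowCongr' π.symm (MeasurableEquiv.refl ℝ))
  exact T.measurableEmbedding.klDiv_map μ ν
end

section
/- Fix n = n_c + n_s with n_c ≥ 0 content coordinates {1, …, n_c} and n_s ≥ 1 style coordinates {n_c+1, …, n}. Let μ be a probability measure on ℝⁿ × ℝⁿ (law of pairs (z, z̃)) satisfying the style-change condition: for every style index l ∈ {n_c+1, …, n} there exist a set A of style indices with l ∈ A and a family of nonempty open sets O(a) ⊆ ℝ^A with a ∈ O(a) for every a ∈ ℝ^A, such that for every open set V ⊆ ℝⁿ × ℝ^A that intersects {(z, t) : z ∈ ℝⁿ, t ∈ O(z_A)} (z_A denoting the A-coordinates of z), μ assigns positive probability to the event {(z, z̃) : z̃_k = z_k for all k ∉ A and (z, z̃_A) ∈ V}. Let h : ℝⁿ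 → ℝ^m be a smooth (continuously differentiable) function with h(z) = h(z̃) for μ-almost every pair (z, z̃). Then h does not depend on the style coordinates: ∂h/∂z_l (z) = 0 for every style index l and every z ∈ ℝⁿ, and consequently there exists a smooth map h_c : ℝ^{n_c} → ℝ^m with h(z) = h_c(z_{1:n_c}) for all z ∈ ℝⁿ. -/
open MeasureTheory


lemma aux_expand {N : ℕ} {F : Type*} [NormedAddCommGroup F] [NormedSpace ℝ F]
    (T : (Fin N → ℝ) →L[ℝ] F) (v : Fin N → ℝ) :
    T v = ∑ k, v k • T (Pi.single k 1) := by
  have hv : v = ∑ k, v k • (Pi.single k 1 : Fin N → ℝ) := by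
    conv_lhs => rw [← Finset.univ_sum_single v]
    congr 1; funext k
    rw [← Pi.single_smul, smul_eq_mul, mul_one]
  conv_lhs => rw [hv]
  rw [map_sum]; simp

lemma aux_single_norm {N : ℕ} (k : Fin N) : ‖(Pi.single k 1 : Fin N → ℝ)‖ ≤ 1 := by
  apply pi_norm_le_iff_of_nonneg zero_le_one |>.2
  intro i
  rcases eq_or_ne i k with rfl | hik
  · simp
  · simp [Pi.single_eq_of_ne hik]

lemma aux_incr {N : ℕ} (g : (Fin N → ℝ) → ℝ) (hgC : ContDiff ℝ 1 g)
    (z₀ p₁ p₂ : Fin N → ℝ) (r : ℝ)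
    (hp₁ : dist p₁ z₀ < r / 2)
    (hu : ‖p₂ - p₁‖ ≤ r / 2)
    (hpos : ∀ y ∈ Metric.closedBall z₀ r, 0 < fderiv ℝ g y (p₂ - p₁)) :
    g p₁ < g p₂ := by
  have hgd : Differentiable ℝ g := hgC.differentiable one_ne_zero
  set u := p₂ - p₁ with hudef
  have hys : ∀ s ∈ Set.Icc (0:ℝ) 1, p₁ + s • u ∈ Metric.closedBall z₀ r := by
    intro s hs
    rw [Metric.mem_closedBall, dist_eq_norm]
    have : p₁ + s • u - z₀ = (p₁ - z₀) + s • u := by ring_nf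
    rw [this]
    have h1 : ‖s • u‖ ≤ r / 2 := by
      rw [norm_smul, Real.norm_eq_abs, abs_of_nonneg hs.1]
      calc s * ‖u‖ ≤ 1 * (r/2) := by
            apply mul_le_mul hs.2 hu (norm_nonneg _) zero_le_one
        _ = r/2 := one_mul _
    calc ‖(p₁ - z₀) + s • u‖ ≤ ‖p₁ - z₀‖ + ‖s • u‖ := norm_add_le _ _
      _ ≤ r/2 + r/2 := by
          apply add_le_add _ h1
          rw [← dist_eq_norm]; exact hp₁.le
      _ = r := by ring
  have hφd : ∀ s : ℝ, HasDerivAt (fun s : ℝ => g (p₁ + s • u))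
      (fderiv ℝ g (p₁ + s • u) u) s := by
    intro s
    have hline : HasDerivAt (fun s : ℝ => p₁ + s • u) u s := by
      simpa using ((hasDerivAt_id s).smul_const u).const_add p₁
    exact (hgd (p₁ + s • u)).hasFDerivAt.comp_hasDerivAt s hline
  have hmono : StrictMonoOn (fun s : ℝ => g (p₁ + s • u)) (Set.Icc 0 1) := by
    apply strictMonoOn_of_deriv_pos (convex_Icc 0 1)
    · exact (hgC.continuous.comp (by fun_prop)).continuousOn
    · intro s hs
      rw [interior_Icc] at hs
      rw [(hφd s).deriv]
      exact hpos _ (hys s ⟨hs.1.le, hs.2.le⟩)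
  have := hmono (Set.left_mem_Icc.2 zero_le_one) (Set.right_mem_Icc.2 zero_le_one) zero_lt_one
  simpa [hudef] using this

lemma aux_const {N m : ℕ} (h : (Fin N → ℝ) → (Fin m → ℝ)) (hhd : Differentiable ℝ h)
    (z w : Fin N → ℝ) (hzero : ∀ y, fderiv ℝ h y (w - z) = 0) : h z = h w := by
  set u := w - z with hu
  have hφ : ∀ s : ℝ, HasDerivAt (fun s : ℝ => h (z + s • u)) 0 s := by
    intro s
    have hline : HasDerivAt (fun s : ℝ => z + s • u) u s := by
      simpa using ((hasDerivAt_id s).smul_const u).const_add z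
    have := (hhd (z + s • u)).hasFDerivAt.comp_hasDerivAt s hline
    rwa [hzero] at this
  have hconst := is_const_of_deriv_eq_zero (f := fun s : ℝ => h (z + s • u))
    (fun s => (hφ s).differentiableAt) (fun s => (hφ s).deriv) 0 1
  simpa [hu] using hconst

/-- **Invariance across views implies the representation depends only on content
(key step of Theorem 6.1).**
Fix `n = n_c + n_s` with content coordinates `{0,…,n_c−1}` and style
coordinates `{n_c,…,n−1}`. Let `μ` be a probability measure on `ℝⁿ × ℝⁿ` (the law of
pairs `(z, z̃)`) satisfying the style-change condition: every style coordinate has a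
positive probability of being perturbed within a fully supported open neighbourhood,
jointly with an arbitrary open constraint on `(z, z̃_A)`. If `h : ℝⁿ → ℝ^m` is `C¹`
and `h(z) = h(z̃)` for `μ`-almost every pair, then `h` does not depend on the style
coordinates, and factors through the content coordinates via a `C¹` map `h_c`. -/
theorem smooth_invariant_map_depends_only_on_content
    {nc ns m : ℕ} (hns : 1 ≤ ns)
    (μ : Measure ((Fin (nc + ns) → ℝ) × (Fin (nc + ns) → ℝ)))
    [IsProbabilityMeasure μ]
    (hstyle : ∀ l : Fin (nc + ns), nc ≤ (l : ℕ) →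
      ∃ A : Set (Fin (nc + ns)), (∀ k ∈ A, nc ≤ (k : ℕ)) ∧ l ∈ A ∧
        ∃ O : (A → ℝ) → Set (A → ℝ),
          (∀ a : A → ℝ, IsOpen (O a) ∧ a ∈ O a) ∧
          ∀ V : Set ((Fin (nc + ns) → ℝ) × (A → ℝ)), IsOpen V →
            (V ∩ {zt | zt.2 ∈ O fun k : A => zt.1 k.1}).Nonempty →
            0 < μ {p | (∀ k : Fin (nc + ns), k ∉ A → p.2 k = p.1 k) ∧
              (p.1, fun k : A => p.2 k.1) ∈ V})
    (h : (Fin (nc + ns) → ℝ) → (Fin m → ℝ))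
    (hhC : ContDiff ℝ 1 h)
    (hinv : ∀ᵐ p ∂μ, h p.1 = h p.2) :
    (∀ l : Fin (nc + ns), nc ≤ (l : ℕ) →
      ∀ z : Fin (nc + ns) → ℝ, fderiv ℝ h z (Pi.single l 1) = 0) ∧
    ∃ hc : (Fin nc → ℝ) → (Fin m → ℝ), ContDiff ℝ 1 hc ∧
      ∀ z : Fin (nc + ns) → ℝ, h z = hc fun i : Fin nc => z (Fin.castAdd ns i) := by
  have hhd : Differentiable ℝ h := hhC.differentiable one_ne_zero
  have hNpos : 0 < nc + ns := by omega
  -- PART 1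
  have key : ∀ l : Fin (nc + ns), nc ≤ (l : ℕ) →
      ∀ z₀ : Fin (nc + ns) → ℝ, fderiv ℝ h z₀ (Pi.single l 1) = 0 := by
    intro l hl z₀
    by_contra hne
    obtain ⟨j, hj⟩ : ∃ j, fderiv ℝ h z₀ (Pi.single l 1) j ≠ 0 := by
      by_contra h'
      push_neg at h'
      exact hne (funext h')
    set σ : ℝ := if 0 < fderiv ℝ h z₀ (Pi.single l 1) j then 1 else -1 with hσdef
    have hσpos : 0 < σ * fderiv ℝ h z₀ (Pi.single l 1) j := by
      by_cases hcs : 0 < fderiv ℝ h z₀ (Pi.single l 1) j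
      · simp [hσdef, hcs]
      · have hlt : fderiv ℝ h z₀ (Pi.single l 1) j < 0 :=
          lt_of_le_of_ne (not_lt.1 hcs) hj
        simp only [hσdef, if_neg hcs]
        nlinarith
    set L : (Fin m → ℝ) →L[ℝ] ℝ := σ • (ContinuousLinearMap.proj j) with hLdef
    have hLapp : ∀ x : Fin m → ℝ, L x = σ * x j := by
      intro x; simp [hLdef]
    set g : (Fin (nc + ns) → ℝ) → ℝ := fun z => L (h z) with hgdef
    have hgC : ContDiff ℝ 1 g := L.contDiff.comp hhC
    have hgd : Differentiable ℝ g := hgC.differentiable one_ne_zero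
    have hfg : ∀ y, fderiv ℝ g y = L.comp (fderiv ℝ h y) := fun y =>
      (L.hasFDerivAt.comp y (hhd y).hasFDerivAt).fderiv
    have hgc1 : Continuous fun y => fderiv ℝ g y (Pi.single l 1) :=
      (hgC.continuous_fderiv one_ne_zero).clm_apply continuous_const
    have hDg0 : 0 < fderiv ℝ g z₀ (Pi.single l 1) := by
      rw [hfg z₀]
      simp only [ContinuousLinearMap.comp_apply, hLapp]
      exact hσpos
    obtain ⟨c, hc, hcz⟩ : ∃ c : ℝ, 0 < c ∧ c < fderiv ℝ g z₀ (Pi.single l 1) :=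
      ⟨fderiv ℝ g z₀ (Pi.single l 1) / 2, half_pos hDg0, half_lt_self hDg0⟩
    obtain ⟨r, hr, hballc, M, hpart, hM0⟩ : ∃ r : ℝ, 0 < r ∧
        (∀ y ∈ Metric.closedBall z₀ r, c < fderiv ℝ g y (Pi.single l 1)) ∧
        ∃ M : ℝ, (∀ y ∈ Metric.closedBall z₀ r, ∀ k : Fin (nc+ns),
          |fderiv ℝ g y (Pi.single k 1)| ≤ M) ∧ 0 ≤ M := by
      have hopen : IsOpen ((fun y => fderiv ℝ g y (Pi.single l 1)) ⁻¹' Set.Ioi c) :=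
        isOpen_Ioi.preimage hgc1
      obtain ⟨r', hr', hsub'⟩ := Metric.isOpen_iff.1 hopen z₀ hcz
      refine ⟨r'/2, by positivity, fun y hy =>
        hsub' (Metric.closedBall_subset_ball (by linarith) hy), ?_⟩
      obtain ⟨M₀, hM₀⟩ := (isCompact_closedBall z₀ (r'/2)).exists_bound_of_continuousOn
        (hgC.continuous_fderiv one_ne_zero).continuousOn
      refine ⟨max M₀ 0, ?_, le_max_right _ _⟩
      intro y hy k
      calc |fderiv ℝ g y (Pi.single k 1)|
          ≤ ‖fderiv ℝ g y‖ * ‖(Pi.single k 1 : Fin (nc+ns) → ℝ)‖ := by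
            rw [← Real.norm_eq_abs]
            exact (fderiv ℝ g y).le_opNorm _
        _ ≤ max M₀ 0 * 1 :=
            mul_le_mul (le_trans (hM₀ y hy) (le_max_left _ _)) (aux_single_norm k)
              (norm_nonneg _) (le_max_right _ _)
        _ = max M₀ 0 := mul_one _
    clear hgc1 hcz hDg0
    obtain ⟨ρ, hρ, hρle⟩ : ∃ ρ : ℝ, 0 < ρ ∧ ((nc + ns : ℕ) : ℝ) * (ρ * M) ≤ c / 2 := by
      have hN1 : (1:ℝ) ≤ ((nc + ns : ℕ) : ℝ) := by exact_mod_cast hNpos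
      have hNpos' : (0:ℝ) < ((nc + ns : ℕ) : ℝ) := by linarith
      have hM1 : (0:ℝ) < M + 1 := by linarith
      refine ⟨c / (2 * ((nc + ns : ℕ) : ℝ) * (M + 1)), by positivity, ?_⟩
      have heq : ((nc + ns : ℕ) : ℝ) * (c / (2 * ((nc + ns : ℕ) : ℝ) * (M + 1)) * M)
          = c * M / (2 * (M + 1)) := by
        field_simp
      rw [heq, div_le_div_iff₀ (by positivity) (by positivity)]
      nlinarith
    obtain ⟨A, hAstyle, hlA, O, hO, hP⟩ := hstyle l hl
    set lA : A := ⟨l, hlA⟩ with hlAdef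
    -- the open set V
    set V : Set ((Fin (nc + ns) → ℝ) × (A → ℝ)) :=
      {zt | zt.1 ∈ Metric.ball z₀ (r/2) ∧
        0 < zt.2 lA - zt.1 l ∧
        ∀ k : A, |zt.2 k - zt.1 k.1| < r/2 ∧
          ((k : Fin (nc+ns)) = l ∨ |zt.2 k - zt.1 k.1| < ρ * (zt.2 lA - zt.1 l))} with hVdef
    have hVopen : IsOpen V := by
      have hck : ∀ k : A, Continuous fun zt : (Fin (nc+ns) → ℝ) × (A → ℝ) =>
          zt.2 k - zt.1 k.1 := by
        intro k; fun_prop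
      have hcl : Continuous fun zt : (Fin (nc+ns) → ℝ) × (A → ℝ) => zt.2 lA - zt.1 l :=
        hck lA
      have : Finite A := Subtype.finite
      rw [hVdef]
      simp only [Set.setOf_and, Set.setOf_forall, Set.setOf_or]
      refine IsOpen.inter (Metric.isOpen_ball.preimage continuous_fst) (IsOpen.inter
        (isOpen_lt continuous_const hcl) (isOpen_iInter_of_finite fun k => IsOpen.inter
          (isOpen_lt (hck k).abs continuous_const) (IsOpen.union ?_
            (isOpen_lt (hck k).abs (continuous_const.mul hcl)))))
      by_cases hk : (k : Fin (nc+ns)) = l <;> simp [hk]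
    -- V meets the constraint set
    have hVne : (V ∩ {zt | zt.2 ∈ O fun k : A => zt.1 k.1}).Nonempty := by
      set a₀ : A → ℝ := fun k => z₀ k.1 with ha₀
      set ψ : ℝ → (A → ℝ) := fun ε k => z₀ k.1 + if (k : Fin (nc+ns)) = l then ε else 0 with hψdef
      have hψc : Continuous ψ := by
        apply continuous_pi
        intro k
        by_cases hk : (k : Fin (nc+ns)) = l <;> simp [hψdef, hk] <;> fun_prop
      have hψ0 : ψ 0 = a₀ := by funext k; simp [hψdef, ha₀]
      have hO₀ := hO a₀
      have hpre : IsOpen (ψ ⁻¹' O a₀) := hO₀.1.preimage hψc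
      have h0mem : (0:ℝ) ∈ ψ ⁻¹' O a₀ := by
        simp only [Set.mem_preimage, hψ0]; exact hO₀.2
      obtain ⟨δ, hδ, hδsub⟩ := Metric.isOpen_iff.1 hpre 0 h0mem
      obtain ⟨ε, hε, hεδ, hεr⟩ : ∃ ε : ℝ, 0 < ε ∧ ε < δ ∧ ε < r/2 :=
        ⟨min (δ/2) (r/4), lt_min (by linarith) (by linarith),
          lt_of_le_of_lt (min_le_left _ _) (by linarith),
          lt_of_le_of_lt (min_le_right _ _) (by linarith)⟩
      refine ⟨(z₀, ψ ε), ⟨?_, ?_, ?_⟩, ?_⟩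
      · exact Metric.mem_ball_self (by linarith)
      · simp [hψdef, hlAdef]; exact hε
      · intro k
        by_cases hk : (k : Fin (nc+ns)) = l
        · refine ⟨?_, Or.inl hk⟩
          simpa [hψdef, hk, abs_of_pos hε] using hεr
        · refine ⟨?_, Or.inr ?_⟩
          · simp [hψdef, hk]
            linarith
          · simpa [hψdef, hk, hlAdef] using mul_pos hρ hε
      · show ψ ε ∈ O fun k : A => z₀ k.1
        have : ε ∈ Metric.ball (0:ℝ) δ := by
          simp only [Metric.mem_ball, dist_zero_right, Real.norm_eq_abs, abs_of_pos hε]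
          exact hεδ
        exact hδsub this
    have hEpos := hP V hVopen hVne
    -- event is contained in the bad set
    have hsub : {p : (Fin (nc+ns) → ℝ) × (Fin (nc+ns) → ℝ) |
        (∀ k, k ∉ A → p.2 k = p.1 k) ∧ (p.1, fun k : A => p.2 k.1) ∈ V}
        ⊆ {p | ¬ h p.1 = h p.2} := by
      rintro p ⟨hoff, hpV⟩
      rw [hVdef] at hpV
      obtain ⟨hp₁ball, hd, hkk⟩ := hpV
      simp only [Set.mem_setOf_eq]
      set u := p.2 - p.1 with hu
      set d : ℝ := p.2 l - p.1 l with hddef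
      have hdpos : 0 < d := hd
      have hu_off : ∀ k, k ∉ A → u k = 0 := by
        intro k hk
        show p.2 k - p.1 k = 0
        rw [hoff k hk, sub_self]
      have hu_half : ∀ k, |u k| ≤ r/2 := by
        intro k
        by_cases hk : k ∈ A
        · exact le_of_lt (hkk ⟨k, hk⟩).1
        · rw [hu_off k hk, abs_zero]; linarith
      have hu_small : ∀ k, k ≠ l → |u k| ≤ ρ * d := by
        intro k hk
        by_cases hkA : k ∈ A
        · rcases (hkk ⟨k, hkA⟩).2 with hkl | hlt
          · exact absurd hkl hk
          · exact le_of_lt hlt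
        · rw [hu_off k hkA, abs_zero]
          exact (mul_pos hρ hdpos).le
      have hul : u l = d := rfl
      have hunorm : ‖u‖ ≤ r/2 := by
        apply pi_norm_le_iff_of_nonneg (by linarith) |>.2
        intro k
        rw [Real.norm_eq_abs]
        exact hu_half k
      -- derivative lower bound
      have hpos : ∀ y ∈ Metric.closedBall z₀ r, 0 < fderiv ℝ g y u := by
        intro y hy
        rw [aux_expand (fderiv ℝ g y) u]
        have hsplit : u l • fderiv ℝ g y (Pi.single l 1)
            + ∑ k ∈ Finset.univ.erase l, u k • fderiv ℝ g y (Pi.single k 1)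
            = ∑ k, u k • fderiv ℝ g y (Pi.single k 1) :=
          Finset.add_sum_erase Finset.univ (fun k => u k • fderiv ℝ g y (Pi.single k 1)) (Finset.mem_univ l)
        rw [← hsplit]
        have hterm1 : d * c < u l • fderiv ℝ g y (Pi.single l 1) := by
          rw [hul, smul_eq_mul]
          exact mul_lt_mul_of_pos_left (hballc y hy) hdpos
        have hsum_bound : |∑ k ∈ Finset.univ.erase l, u k • fderiv ℝ g y (Pi.single k 1)|
            ≤ ((nc + ns : ℕ) : ℝ) * ((ρ * d) * M) := by
          calc |∑ k ∈ Finset.univ.erase l, u k • fderiv ℝ g y (Pi.single k 1)|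
              ≤ ∑ k ∈ Finset.univ.erase l, |u k • fderiv ℝ g y (Pi.single k 1)| :=
                Finset.abs_sum_le_sum_abs _ _
            _ ≤ ∑ _k ∈ Finset.univ.erase l, (ρ * d) * M := by
                apply Finset.sum_le_sum
                intro k hkmem
                rw [smul_eq_mul, abs_mul]
                exact mul_le_mul (hu_small k (Finset.ne_of_mem_erase hkmem))
                  (hpart y hy k) (abs_nonneg _)
                  (mul_nonneg hρ.le hdpos.le)
            _ = ((Finset.univ.erase l).card : ℝ) * ((ρ * d) * M) := by
                rw [Finset.sum_const, nsmul_eq_mul]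
            _ ≤ ((nc + ns : ℕ) : ℝ) * ((ρ * d) * M) := by
                apply mul_le_mul_of_nonneg_right _
                  (mul_nonneg (mul_nonneg hρ.le hdpos.le) hM0)
                have hcard : (Finset.univ.erase l).card ≤ nc + ns := by
                  calc (Finset.univ.erase l).card ≤ (Finset.univ : Finset (Fin (nc+ns))).card :=
                        Finset.card_le_card (Finset.erase_subset _ _)
                    _ = nc + ns := by simp
                exact_mod_cast hcard
        have hbound2 : ((nc + ns : ℕ) : ℝ) * ((ρ * d) * M) ≤ c/2 * d := by
          have heq : ((nc + ns : ℕ) : ℝ) * ((ρ * d) * M)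
              = (((nc + ns : ℕ) : ℝ) * (ρ * M)) * d := by ring
          rw [heq]
          exact mul_le_mul_of_nonneg_right hρle hdpos.le
        have hneg : -(c/2 * d) ≤ ∑ k ∈ Finset.univ.erase l, u k • fderiv ℝ g y (Pi.single k 1) :=
          (abs_le.1 (le_trans hsum_bound hbound2)).1
        have hsum2 : d * c + -(c/2 * d) ≤ u l • fderiv ℝ g y (Pi.single l 1)
            + ∑ k ∈ Finset.univ.erase l, u k • fderiv ℝ g y (Pi.single k 1) :=
          add_le_add hterm1.le hneg
        calc (0:ℝ) < c/2 * d := mul_pos (half_pos hc) hdpos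
          _ = d * c + -(c/2 * d) := by ring
          _ ≤ _ := hsum2
      -- conclude
      have hlt : g p.1 < g p.2 := by
        apply aux_incr g hgC z₀ p.1 p.2 r hp₁ball
        · rwa [← hu]
        · intro y hy; rw [← hu]; exact hpos y hy
      intro heq
      have hge : g p.1 = g p.2 := by
        show L (h p.1) = L (h p.2)
        rw [heq]
      exact hlt.ne hge
    have hzero : μ {p : (Fin (nc+ns) → ℝ) × (Fin (nc+ns) → ℝ) | ¬ h p.1 = h p.2} = 0 :=
      ae_iff.mp hinv
    have hEzero : μ {p | (∀ k, k ∉ A → p.2 k = p.1 k) ∧ (p.1, fun k : A => p.2 k.1) ∈ V} = 0 :=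
      measure_mono_null hsub hzero
    rw [hEzero] at hEpos
    exact lt_irrefl 0 hEpos
  -- PART 2
  refine ⟨key, ?_⟩
  set P : (Fin nc → ℝ) →L[ℝ] (Fin (nc+ns) → ℝ) :=
    ContinuousLinearMap.pi (fun i => if hi : (i:ℕ) < nc then ContinuousLinearMap.proj ⟨i.1, hi⟩ else 0)
    with hPdef
  have hPapp : ∀ (cv : Fin nc → ℝ) (i : Fin (nc+ns)),
      P cv i = if hi : (i:ℕ) < nc then cv ⟨i.1, hi⟩ else 0 := by
    intro cv i
    by_cases hi : (i:ℕ) < nc <;> simp [hPdef, ContinuousLinearMap.pi_apply, hi]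
  refine ⟨fun cv => h (P cv), hhC.comp P.contDiff, ?_⟩
  intro z
  set w : Fin (nc+ns) → ℝ := P (fun i : Fin nc => z (Fin.castAdd ns i)) with hwdef
  have hagree : ∀ i : Fin (nc+ns), (i:ℕ) < nc → z i = w i := by
    intro i hi
    rw [hwdef, hPapp, dif_pos hi]
    exact congrArg z (Fin.ext rfl)
  have hzero : ∀ y, fderiv ℝ h y (w - z) = 0 := by
    intro y
    rw [aux_expand (fderiv ℝ h y) (w - z)]
    apply Finset.sum_eq_zero
    intro k _
    by_cases hk : (k:ℕ) < nc
    · have : (w - z) k = 0 := by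
        rw [Pi.sub_apply, hagree k hk, sub_self]
      rw [this, zero_smul]
    · rw [key k (not_lt.1 hk) y, smul_zero]
  exact aux_const h hhd z w hzero
end
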